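/- arXiv:2512.21908 — 13 statements merged into one kernel-verified Lean document; each statement's English description precedes it below -/
import Mathlib

section
/- Let q be a prime power not divisible by 3. Then there exists a nonzero element α of F_{q^3} with Tr_{F_{q^3}/F_q}(α) = 0 such that {1, α, α^q} is a basis of F_{q^3} over F_q. -/
/-!
The trace kernel of `E/F` is a plane with `q²` elements. For `α` in it, a relation
`c₀ + c₁ α + c₂ α^q = 0`, summed over its Frobenius conjugates, forces `c₀ = 0` because `3 ≠ 0`;
the remaining relation and its conjugate then force `c₁ = c₂ = 0` unless
`α² + α α^q + α^(2q) = 0`. The solutions of that equation are roots of `X^(2q-1) + X^q + X`,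
so there are at most `2q - 1 < q²` of them.
-/

open Polynomial

theorem linearIndependent_one_self_apply {K L : Type*} [Field K] [CommRing L] [IsDomain L]
    [Algebra K L] (σ : L →ₐ[K] L) {α : L} (h3 : (3 : K) ≠ 0) (hσ3 : σ (σ (σ α)) = α)
    (htr : α + σ α + σ (σ α) = 0) (hα : α ^ 2 + α * σ α + σ α ^ 2 ≠ 0) :
    LinearIndependent K ![1, α, σ α] := by
  rw [Fintype.linearIndependent_iff]
  intro c hc
  simp only [Fin.sum_univ_three, Matrix.cons_val_zero, Matrix.cons_val_one, Matrix.cons_val_two,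
    Matrix.head_cons, Matrix.tail_cons, Algebra.smul_def, mul_one] at hc
  have hc' := congrArg σ hc
  have hc'' := congrArg σ hc'
  simp only [map_add, map_mul, AlgHom.commutes, map_zero, hσ3] at hc' hc''
  have hinj {x : K} : algebraMap K L x = 0 → x = 0 := (FaithfulSMul.algebraMap_eq_zero_iff K L).1
  have h3L : (3 : L) ≠ 0 := by
    simpa only [map_ofNat] using (FaithfulSMul.algebraMap_eq_zero_iff K L).not.2 h3
  have hc0 : c 0 = 0 := by
    refine hinj ((mul_eq_zero.1 ?_).resolve_left h3L)
    linear_combination hc + hc' + hc'' - (algebraMap K L (c 1) + algebraMap K L (c 2)) * htr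
  set x := algebraMap K L (c 1)
  set y := algebraMap K L (c 2)
  rw [hc0, map_zero, zero_add] at hc hc'
  have hconj : -y * α + (x - y) * σ α = 0 := by linear_combination hc' - y * htr
  have hc2 : c 2 = 0 := by
    refine hinj (pow_eq_zero_iff two_ne_zero |>.1 ((mul_eq_zero.1 ?_).resolve_right hα))
    linear_combination (y * σ α) * hc - (y * α) * hconj
  have hc1 : c 1 = 0 := by
    refine hinj ((mul_eq_zero.1 ?_).resolve_right hα)
    linear_combination (α + σ α) * hc + σ α * hconj
  intro i
  fin_cases i <;> assumption

theorem Polynomial.exists_mem_eval_ne_zero_of_natDegree_lt_natCard {R : Type*} [CommRing R]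
    [IsDomain R] {p : R[X]} (hp : p ≠ 0) {S : Set R} (hS : p.natDegree < Nat.card S) :
    ∃ x ∈ S, p.eval x ≠ 0 := by
  have : Fintype S := @Fintype.ofFinite _ (Nat.finite_of_card_ne_zero (by omega))
  by_contra! h
  exact hp <| eq_zero_of_natDegree_lt_card_of_eval_eq_zero p Subtype.val_injective
    (fun x ↦ h x.1 x.2) (by rwa [← Nat.card_eq_fintype_card])

theorem exists_mem_sq_add_mul_pow_add_pow_sq_ne_zero {R : Type*} [CommRing R] [IsDomain R]
    {n : ℕ} (hn : 2 ≤ n) {S : Set R} (hS : 2 * n - 1 < Nat.card S) :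
    ∃ x ∈ S, x ^ 2 + x * x ^ n + (x ^ n) ^ 2 ≠ 0 := by
  have hp : (X ^ (2 * n - 1) + X ^ n + X : R[X]) ≠ 0 := fun h ↦ by
    have h1 : 2 * n - 1 ≠ 1 := by omega
    have h2 : n ≠ 1 := by omega
    simpa [coeff_X_pow, coeff_X, h1.symm, h2.symm] using congrArg (coeff · 1) h
  have hdeg : (X ^ (2 * n - 1) + X ^ n + X : R[X]).natDegree ≤ 2 * n - 1 := by
    compute_degree
    all_goals omega
  obtain ⟨x, hxS, hx⟩ := exists_mem_eval_ne_zero_of_natDegree_lt_natCard hp (hdeg.trans_lt hS)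
  have hx0 : x ≠ 0 := by
    rintro rfl
    simp [zero_pow (show 2 * n - 1 ≠ 0 by omega), zero_pow (show n ≠ 0 by omega)] at hx
  refine ⟨x, hxS, ?_⟩
  convert mul_ne_zero hx0 hx using 1
  simp only [eval_add, eval_pow, eval_X]
  rw [← pow_mul, show n * 2 = 2 * n - 1 + 1 by omega, pow_succ]
  ring

theorem Algebra.natCard_ker_trace {K L : Type*} [Field K] [Finite K] [Field L] [Algebra K L]
    [FiniteDimensional K L] :
    Nat.card (LinearMap.ker (Algebra.trace K L)) = Nat.card K ^ (Module.finrank K L - 1) := by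
  have := (Algebra.trace K L).finrank_range_add_finrank_ker
  rw [LinearMap.range_eq_top.2 (Algebra.trace_surjective K L), finrank_top,
    Module.finrank_self] at this
  rw [Module.natCard_eq_pow_finrank (K := K)]
  congr 1
  omega

theorem FiniteField.algebraMap_trace_eq_of_finrank_eq_three {K L : Type*} [Field K] [Fintype K]
    [Field L] [Finite L] [Algebra K L] (h : Module.finrank K L = 3) (x : L) :
    algebraMap K L (Algebra.trace K L x) = x + x ^ Fintype.card K + x ^ Fintype.card K ^ 2 := by
  simp [algebraMap_trace_eq_sum_pow, h, Finset.sum_range_succ, Nat.card_eq_fintype_card]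

theorem FiniteField.three_ne_zero_of_not_dvd_card {K : Type*} [Field K] [Fintype K]
    (h : ¬ 3 ∣ Fintype.card K) : (3 : K) ≠ 0 := by
  have : Fact (Nat.Prime 3) := ⟨Nat.prime_three⟩
  exact_mod_cast
    ((isUnit_iff_not_dvd_char K 3).2 ((prime_dvd_char_iff_dvd_card 3).not.2 h)).ne_zero

theorem stmt_1_general (q : ℕ) (h3 : ¬ (3 ∣ q))
    (F E : Type*) [Field F] [Fintype F] [Field E] [Fintype E] [Algebra F E]
    (hF : Fintype.card F = q) (hE : Fintype.card E = q ^ 3) :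
    ∃ α : E, α ≠ 0 ∧ α + α ^ q + α ^ q ^ 2 = 0 ∧
      ∃ b : Module.Basis (Fin 3) F E, b 0 = 1 ∧ b 1 = α ∧ b 2 = α ^ q := by
  subst hF
  have hq : 2 ≤ Fintype.card F := Fintype.one_lt_card
  have hrank : Module.finrank F E = 3 :=
    Nat.pow_right_injective hq (Module.card_eq_pow_finrank.symm.trans hE)
  have hker : 2 * Fintype.card F - 1 < Nat.card (LinearMap.ker (Algebra.trace F E)) := by
    rw [Algebra.natCard_ker_trace, hrank, Nat.card_eq_fintype_card, show 3 - 1 = 2 from rfl]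
    have : 2 * Fintype.card F < Fintype.card F ^ 2 + 1 := by nlinarith
    omega
  obtain ⟨α, hα, hαQ⟩ := exists_mem_sq_add_mul_pow_add_pow_sq_ne_zero hq hker
  have htr : α + α ^ Fintype.card F + α ^ Fintype.card F ^ 2 = 0 := by
    rw [← FiniteField.algebraMap_trace_eq_of_finrank_eq_three hrank, LinearMap.mem_ker.1 hα,
      map_zero]
  have hli := linearIndependent_one_self_apply (FiniteField.frobeniusAlgHom F E)
    (FiniteField.three_ne_zero_of_not_dvd_card h3)
    (by simp only [FiniteField.coe_frobeniusAlgHom, ← pow_mul, ← pow_three', ← hE,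
      FiniteField.pow_card])
    (by simpa only [FiniteField.coe_frobeniusAlgHom, ← pow_mul, ← sq] using htr) hαQ
  refine ⟨α, fun h ↦ by simp [h] at hαQ, htr,
    basisOfLinearIndependentOfCardEqFinrank hli (by simp [hrank]), ?_, ?_, ?_⟩ <;>
    simp [coe_basisOfLinearIndependentOfCardEqFinrank]

theorem stmt_1 (q : ℕ) (hq : IsPrimePow q) (h3 : ¬ (3 ∣ q))
    (F E : Type*) [Field F] [Fintype F] [Field E] [Fintype E] [Algebra F E]
    (hF : Fintype.card F = q) (hE : Fintype.card E = q ^ 3) :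
    ∃ α : E, α ≠ 0 ∧ α + α ^ q + α ^ q ^ 2 = 0 ∧
      ∃ b : Module.Basis (Fin 3) F E, b 0 = 1 ∧ b 1 = α ∧ b 2 = α ^ q :=
  stmt_1_general q h3 F E hF hE
end

section
/- Let θ be a normal element of F_{q^n} over F_q (so that {θ, θ^q, ..., θ^{q^{n-1}}} is a basis), and let c = Tr_{F_{q^n}/F_q}(θ). Then c ≠ 0 and {1, θ, θ^q, ..., θ^{q^{n-2}}} is a basis of F_{q^n} over F_q. -/
/-!
The `q`-power Frobenius is `F`-linear, fixes `1` and shifts the normal basis `θ ^ q ^ i`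
cyclically, so the coordinates of `1` in that basis are all equal: `1 = a • c` for some scalar
`a`. Hence `c ≠ 0`, and `c` lies in the span of `1, θ, …, θ ^ q ^ (n - 2)`; so does
`θ ^ q ^ (n - 1) = c - ∑_{i < n - 1} θ ^ q ^ i`, and these `n` vectors span `E`.
-/

open Module Submodule

namespace Module.Basis

variable {R M : Type*} [CommRing R] [AddCommGroup M] [Module R M]

section Cyclic

variable {n : ℕ} (b : Basis (Fin (n + 1)) R M) {f : M →ₗ[R] M}
  (hf : ∀ i, f (b i) = b (i + 1)) {x : M} (hx : f x = x)
include hf hx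

theorem repr_add_one_of_cyclic (i : Fin (n + 1)) : b.repr x (i + 1) = b.repr x i := by
  have hshift : x = ∑ j, b.repr x (j - 1) • b j :=
    calc x = f (∑ j, b.repr x j • b j) := by rw [b.sum_repr, hx]
      _ = ∑ j, b.repr x j • b (j + 1) := by simp only [map_sum, map_smul, hf]
      _ = ∑ j, b.repr x (j - 1) • b j :=
        Fintype.sum_equiv (Equiv.addRight 1) _ _ fun j => by simp
  calc b.repr x (i + 1) = b.repr (∑ j, b.repr x (j - 1) • b j) (i + 1) :=
        congrArg (fun y => b.repr y (i + 1)) hshift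
    _ = b.repr x i := by rw [b.repr_sum_self, add_sub_cancel_right]

theorem repr_eq_repr_zero_of_cyclic (i : Fin (n + 1)) : b.repr x i = b.repr x 0 := by
  induction i using Fin.induction with
  | zero => rfl
  | succ i ih => rw [← Fin.coeSucc_eq_succ, b.repr_add_one_of_cyclic hf hx, ih]

theorem eq_smul_sum_of_cyclic : x = b.repr x 0 • ∑ i, b i :=
  calc x = ∑ i, b.repr x i • b i := (b.sum_repr x).symm
    _ = b.repr x 0 • ∑ i, b i := by
      rw [Finset.smul_sum]
      exact Finset.sum_congr rfl fun i _ => by rw [b.repr_eq_repr_zero_of_cyclic hf hx i]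

end Cyclic

theorem top_le_span_of_sum_mem {ι : Type*} [Fintype ι] [DecidableEq ι] (b : Basis ι R M)
    {s : Set M} (j : ι) (hsum : ∑ i, b i ∈ span R s) (hb : ∀ i ≠ j, b i ∈ span R s) :
    ⊤ ≤ span R s := by
  have hj : b j ∈ span R s := by
    rw [← Finset.add_sum_erase _ _ (Finset.mem_univ j)] at hsum
    have hrest : ∑ i ∈ Finset.univ.erase j, b i ∈ span R s :=
      sum_mem fun i hi => hb i (Finset.ne_of_mem_erase hi)
    exact ((span R s).add_mem_iff_left hrest).mp hsum
  rw [← b.span_eq, span_le]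
  rintro _ ⟨i, rfl⟩
  obtain rfl | hi := eq_or_ne i j
  exacts [hj, hb i hi]

end Module.Basis

theorem pow_pow_val_add_one {M : Type*} [Monoid M] {x : M} {q n : ℕ} (hx : x ^ q ^ (n + 1) = x)
    (i : Fin (n + 1)) : (x ^ q ^ (i : ℕ)) ^ q = x ^ q ^ ((i + 1 : Fin (n + 1)) : ℕ) := by
  rw [← pow_mul, ← pow_succ, Fin.val_add_one]
  split_ifs with hi
  · rw [hi, Fin.val_last, hx, pow_zero, pow_one]
  · rfl

theorem stmt_2_general (q n : ℕ) (hn : 0 < n)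
    (F E : Type*) [Field F] [Fintype F] [Field E] [Fintype E] [Algebra F E]
    (hF : Fintype.card F = q) (hE : Fintype.card E = q ^ n)
    (θ : E) (hθ : ∃ b : Module.Basis (Fin n) F E, ∀ i : Fin n, b i = θ ^ q ^ (i : ℕ))
    (c : E) (hc : c = ∑ i ∈ Finset.range n, θ ^ q ^ i) :
    c ≠ 0 ∧ ∃ b : Module.Basis (Fin n) F E,
      ∀ i : Fin n, b i = if (i : ℕ) = 0 then 1 else θ ^ q ^ ((i : ℕ) - 1) := by
  obtain ⟨m, rfl⟩ := Nat.exists_eq_add_one_of_ne_zero hn.ne'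
  obtain ⟨b, hb⟩ := hθ
  subst hF
  have hfrob : ∀ i, FiniteField.frobeniusAlgHom F E (b i) = b (i + 1) := fun i => by
    rw [FiniteField.coe_frobeniusAlgHom, hb, hb]
    exact pow_pow_val_add_one (hE ▸ FiniteField.pow_card θ) i
  have hcb : c = ∑ i, b i := by simp only [hc, hb, ← Fin.sum_univ_eq_sum_range]
  have hone : 1 = b.repr 1 0 • c :=
    hcb ▸ b.eq_smul_sum_of_cyclic (f := (FiniteField.frobeniusAlgHom F E).toLinearMap) hfrob
      (map_one (FiniteField.frobeniusAlgHom F E))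
  have ha : b.repr 1 0 ≠ 0 := by intro h; simp [h] at hone
  have hspan : ⊤ ≤ span F (Set.range fun i : Fin (m + 1) =>
      if (i : ℕ) = 0 then 1 else θ ^ Fintype.card F ^ ((i : ℕ) - 1)) := by
    refine b.top_le_span_of_sum_mem (Fin.last m) ?_ fun i hi => subset_span ⟨i + 1, ?_⟩
    · rw [← hcb, ← smul_mem_iff _ ha, ← hone]
      exact subset_span ⟨0, by simp⟩
    · simp [Fin.val_add_one, hi, hb]
  have hcard : Fintype.card (Fin (m + 1)) = finrank F E := by simp [finrank_eq_card_basis b]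
  exact ⟨by rintro rfl; simp at hone, basisOfTopLeSpanOfCardEqFinrank _ hspan hcard,
    fun i => by simp⟩

theorem stmt_2 (q n : ℕ) (hq : IsPrimePow q) (hn : 0 < n)
    (F E : Type*) [Field F] [Fintype F] [Field E] [Fintype E] [Algebra F E]
    (hF : Fintype.card F = q) (hE : Fintype.card E = q ^ n)
    (θ : E) (hθ : ∃ b : Module.Basis (Fin n) F E, ∀ i : Fin n, b i = θ ^ q ^ (i : ℕ))
    (c : E) (hc : c = ∑ i ∈ Finset.range n, θ ^ q ^ i) :
    c ≠ 0 ∧ ∃ b : Module.Basis (Fin n) F E,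
      ∀ i : Fin n, b i = if (i : ℕ) = 0 then 1 else θ ^ q ^ ((i : ℕ) - 1) :=
  stmt_2_general q n hn F E hF hE θ hθ c hc
end

section
/- Let q = 2^m and let a, γ ∈ F_q with a² + a + 1 ≠ 0. Fix α ∈ F_{q^3}* with Tr_{F_{q^3}/F_q}(α) = 0 such that {1, α, α^q} is a basis of F_{q^3} over F_q, and let h : F_{q^3} → F_{q^3} be any function. Then the map f(X) = X + aX^q + γ·Tr_{F_{q^3}/F_q}(h(X)) is a bijection of F_{q^3} if and only if for every y, z ∈ F_q the map x ↦ (a+1)x + γ·Tr_{F_{q^3}/F_q}(h(x + yα + zα^q)) is a bijection of F_q. -/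
/-!
Write `q = #F` and `X = x + yα + zα^q` with `x, y, z ∈ F`. Since `Tr α = 0` gives
`α^(q²) = -α - α^q`, the `F`-linear map `X ↦ X + aX^q` becomes
`(x, y, z) ↦ ((a + 1)x, y - az, ay + (1 - a)z)`, while `γ Tr(h X)` lies in `F` and only moves
the first coordinate. So `f` is a skew product over the linear map
`(y, z) ↦ (y - az, ay + (1 - a)z)`, whose determinant `a² - a + 1` equals `a² + a + 1` in
characteristic `2`. Such a skew product is bijective exactly when every fibre map
`x ↦ (a + 1)x + γ Tr(h(x + yα + zα^q))` is.
-/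

open Function Set

theorem Function.bijective_skewProduct_iff {A B C D : Type*} (g : B → A → C) {M : B → D}
    (hM : Bijective M) :
    Bijective (fun p : A × B => (g p.2 p.1, M p.2)) ↔ ∀ b, Bijective (g b) := by
  refine ⟨fun hG b => ⟨fun x x' hx => ?_, fun c => ?_⟩, fun hg => ⟨?_, ?_⟩⟩
  · exact congrArg Prod.fst (hG.injective (a₁ := (x, b)) (a₂ := (x', b)) (Prod.ext hx rfl))
  · obtain ⟨⟨x, b'⟩, hx⟩ := hG.surjective (c, M b)
    simp only [Prod.mk.injEq] at hx
    obtain rfl := hM.injective hx.2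
    exact ⟨x, hx.1⟩
  · rintro ⟨x, b⟩ ⟨x', b'⟩ h
    simp only [Prod.mk.injEq] at h
    obtain rfl := hM.injective h.2
    rw [(hg b).injective h.1]
  · rintro ⟨c, d⟩
    obtain ⟨b, rfl⟩ := hM.surjective d
    obtain ⟨x, rfl⟩ := (hg b).surjective c
    exact ⟨(x, b), rfl⟩

theorem Function.Semiconj.bijOn_range_iff {α β : Type*} {f : α → β} {fa : α → α} {fb : β → β}
    (h : Semiconj f fa fb) (hf : Injective f) :
    BijOn fb (range f) (range f) ↔ Bijective fa := by
  refine ⟨fun hb => ⟨fun x y hxy => ?_, fun y => ?_⟩, fun ha => h.bijOn_range ha hf⟩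
  · exact hf (hb.injOn (mem_range_self x) (mem_range_self y) (by simp only [← h.eq, hxy]))
  · obtain ⟨_, ⟨x, rfl⟩, hx⟩ := hb.surjOn (mem_range_self y)
    exact ⟨x, hf (by rw [h.eq, hx])⟩

theorem bijective_prodLinear_of_det_ne_zero {K : Type*} [Field K] {p r s t : K}
    (hdet : p * t - r * s ≠ 0) :
    Bijective (fun v : K × K => (p * v.1 + r * v.2, s * v.1 + t * v.2)) := by
  have hd := mul_inv_cancel₀ hdet
  rw [bijective_iff_has_inverse]
  refine ⟨fun w => ((t * w.1 - r * w.2) / (p * t - r * s), (p * w.2 - s * w.1) / (p * t - r * s)),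
    fun v => ?_, fun w => ?_⟩
  · ext
    · linear_combination v.1 * hd
    · linear_combination v.2 * hd
  · ext
    · linear_combination w.1 * hd
    · linear_combination w.2 * hd

theorem Module.Basis.bijective_fin_three {R M : Type*} [CommSemiring R] [AddCommMonoid M]
    [Module R M] (b : Module.Basis (Fin 3) R M) :
    Bijective (fun c : R × R × R => c.1 • b 0 + c.2.1 • b 1 + c.2.2 • b 2) := by
  have : (fun c : R × R × R => c.1 • b 0 + c.2.1 • b 1 + c.2.2 • b 2) =
      b.equivFun.symm ∘ fun c => ![c.1, c.2.1, c.2.2] := by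
    ext c; simp [Module.Basis.equivFun_symm_apply, Fin.sum_univ_three]
  rw [this]
  refine b.equivFun.symm.bijective.comp (bijective_iff_has_inverse.mpr
    ⟨fun v => (v 0, v 1, v 2), fun c => rfl, fun v => ?_⟩)
  ext i; fin_cases i <;> rfl

namespace FiniteField

variable {F E : Type*} [Field F] [Fintype F] [Field E] [Algebra F E]

theorem algebraMap_trace_eq_of_finrank_eq_three_s4 [Finite E] (h3 : Module.finrank F E = 3) (x : E) :
    algebraMap F E (Algebra.trace F E x) = x + x ^ Fintype.card F + x ^ Fintype.card F ^ 2 := by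
  simp [algebraMap_trace_eq_sum_pow, h3, Finset.sum_range_succ]

variable (F) in
def frobeniusCoords (α : E) (c : F × F × F) : E :=
  algebraMap F E c.1 + algebraMap F E c.2.1 * α + algebraMap F E c.2.2 * α ^ Fintype.card F

theorem bijective_frobeniusCoords {α : E} (b : Module.Basis (Fin 3) F E) (hb0 : b 0 = 1)
    (hb1 : b 1 = α) (hb2 : b 2 = α ^ Fintype.card F) :
    Bijective (frobeniusCoords F α) := by
  convert b.bijective_fin_three using 1
  ext c
  simp [frobeniusCoords, Algebra.smul_def, hb0, hb1, hb2]

theorem frobeniusCoords_add_mul_pow_card {α : E}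
    (hα : α + α ^ Fintype.card F + α ^ Fintype.card F ^ 2 = 0) (a : F) (c : F × F × F) :
    frobeniusCoords F α c + algebraMap F E a * frobeniusCoords F α c ^ Fintype.card F =
      frobeniusCoords F α
        ((a + 1) * c.1, c.2.1 - a * c.2.2, a * c.2.1 + (1 - a) * c.2.2) := by
  have hfrob : ∀ X : E, X ^ Fintype.card F = frobeniusAlgHom F E X := fun _ => rfl
  have hα2 : frobeniusAlgHom F E (frobeniusAlgHom F E α) = -α - frobeniusAlgHom F E α := by
    rw [← hfrob, ← hfrob, ← pow_mul, ← sq]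
    linear_combination hα
  simp only [frobeniusCoords, hfrob, map_add, map_mul, map_sub, map_one, AlgHom.commutes, hα2]
  ring

theorem two_eq_zero_of_card_eq_two_pow {m : ℕ} (hF : Fintype.card F = 2 ^ m) : (2 : F) = 0 := by
  have := cast_card_eq_zero F
  rw [hF] at this
  push_cast at this
  exact eq_zero_of_pow_eq_zero this

end FiniteField

open FiniteField

theorem stmt_4_general (m : ℕ) (q : ℕ) (hq : q = 2 ^ m)
    (F E : Type*) [Field F] [Fintype F] [Field E] [Algebra F E]
    (hF : Fintype.card F = q)
    (Tr : E → E) (hTr : ∀ X, Tr X = X + X ^ q + X ^ q ^ 2)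
    (a γ : F) (ha : a ^ 2 + a + 1 ≠ 0)
    (α : E) (hαtr : Tr α = 0)
    (hb : ∃ b : Module.Basis (Fin 3) F E, b 0 = 1 ∧ b 1 = α ∧ b 2 = α ^ q)
    (h : E → E) :
    Function.Bijective
        (fun X : E => X + algebraMap F E a * X ^ q + algebraMap F E γ * Tr (h X)) ↔
      ∀ y z : F,
        Set.BijOn
          (fun x : E =>
            (algebraMap F E a + 1) * x +
              algebraMap F E γ *
                Tr (h (x + algebraMap F E y * α + algebraMap F E z * α ^ q)))
          (Set.range (algebraMap F E)) (Set.range (algebraMap F E)) := by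
  obtain ⟨b, hb0, hb1, hb2⟩ := hb
  subst hF
  have : Finite E := have := Module.Finite.of_basis b; Module.finite_of_finite F
  have hTr' : ∀ X, Tr X = algebraMap F E (Algebra.trace F E X) := fun X => by
    rw [hTr, algebraMap_trace_eq_of_finrank_eq_three_s4 (by simp [Module.finrank_eq_card_basis b])]
  have hαq : α + α ^ Fintype.card F + α ^ Fintype.card F ^ 2 = 0 := by rwa [hTr] at hαtr
  have hcoords := bijective_frobeniusCoords b hb0 hb1 hb2
  have hdet : 1 * (1 - a) - -a * a ≠ 0 := by
    have h2 := two_eq_zero_of_card_eq_two_pow hq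
    contrapose! ha
    linear_combination ha + a * h2
  let g : F × F → F → F := fun p x =>
    (a + 1) * x + γ * Algebra.trace F E (h (frobeniusCoords F α (x, p)))
  have hconj : (fun X : E => X + algebraMap F E a * X ^ Fintype.card F +
        algebraMap F E γ * Tr (h X)) ∘ frobeniusCoords F α =
      frobeniusCoords F α ∘
        fun c => (g c.2 c.1, 1 * c.2.1 + -a * c.2.2, a * c.2.1 + (1 - a) * c.2.2) := by
    ext c
    simp only [comp_apply, frobeniusCoords_add_mul_pow_card hαq, hTr', g]
    simp only [frobeniusCoords, map_add, map_mul, map_sub, map_neg, map_one]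
    ring
  rw [← hcoords.of_comp_iff, hconj, hcoords.of_comp_iff',
    bijective_skewProduct_iff g (bijective_prodLinear_of_det_ne_zero hdet), Prod.forall]
  refine forall₂_congr fun y z => (Semiconj.bijOn_range_iff (fun x => ?_)
    (algebraMap F E).injective).symm
  simp [g, frobeniusCoords, hTr']

theorem stmt_4 (m : ℕ) (hm : 0 < m) (q : ℕ) (hq : q = 2 ^ m)
    (F E : Type*) [Field F] [Fintype F] [Field E] [Fintype E] [Algebra F E]
    (hF : Fintype.card F = q) (hE : Fintype.card E = q ^ 3)
    (Tr : E → E) (hTr : ∀ X, Tr X = X + X ^ q + X ^ q ^ 2)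
    (a γ : F) (ha : a ^ 2 + a + 1 ≠ 0)
    (α : E) (hα0 : α ≠ 0) (hαtr : Tr α = 0)
    (hb : ∃ b : Module.Basis (Fin 3) F E, b 0 = 1 ∧ b 1 = α ∧ b 2 = α ^ q)
    (h : E → E) :
    Function.Bijective
        (fun X : E => X + algebraMap F E a * X ^ q + algebraMap F E γ * Tr (h X)) ↔
      ∀ y z : F,
        Set.BijOn
          (fun x : E =>
            (algebraMap F E a + 1) * x +
              algebraMap F E γ *
                Tr (h (x + algebraMap F E y * α + algebraMap F E z * α ^ q)))
          (Set.range (algebraMap F E)) (Set.range (algebraMap F E)) :=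
  stmt_4_general m q hq F E hF Tr hTr a γ ha α hαtr hb h
end

section
/- Let q = 2^m, and for y, z ∈ F_q and α ∈ F_{q^3} with Tr_{F_{q^3}/F_q}(α) = 0 and {1, α, α^q} a basis, write X = x + yα + zα^q with x ∈ F_q. Then Tr_{F_{q^3}/F_q}(X^{q+1}) = x² + (y² + z² + yz)·Tr_{F_{q^3}/F_q}(α^{q+1}). -/
/-!
Let `σ` be the `q`-power Frobenius. In characteristic `2`, `Tr α = 0` says `σ (σ α) = α + σ α`,
so `σ` permutes `α`, `σ α`, `α + σ α` cyclically. As `x`, `y`, `z` are fixed by `σ`, the trace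
`Tr (X ^ (q + 1)) = X σX + σX σ²X + σ²X X` is then a polynomial in `x, y, z, α, σ α`, and it agrees
with the right-hand side modulo `2`.
-/

section CyclicTrace

variable {R : Type*} [CommRing R]

def cyclicTrace (σ : R →+* R) (t : R) : R := t + σ t + σ (σ t)

variable [CharP R 2] {σ : R →+* R} {a : R}

theorem apply_apply_eq_of_cyclicTrace_eq_zero (ha : cyclicTrace σ a = 0) :
    σ (σ a) = a + σ a := by
  rw [cyclicTrace, CharTwo.add_eq_zero] at ha
  exact ha.symm

theorem cyclicTrace_mul_apply_of_cyclicTrace_eq_zero (ha : cyclicTrace σ a = 0)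
    {x y z : R} (hx : σ x = x) (hy : σ y = y) (hz : σ z = z) :
    cyclicTrace σ ((x + y * a + z * σ a) * σ (x + y * a + z * σ a)) =
      x ^ 2 + (y ^ 2 + z ^ 2 + y * z) * cyclicTrace σ (a * σ a) := by
  simp only [cyclicTrace, map_add, map_mul, hx, hy, hz, apply_apply_eq_of_cyclicTrace_eq_zero ha]
  rw [← sub_eq_zero]
  ring_nf
  -- every integer coefficient left by `ring_nf` is even
  simp [CharTwo.ofNat_eq_mod]

end CyclicTrace

theorem stmt_5_general (m : ℕ) (q : ℕ) (hq : q = 2 ^ m)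
    (F E : Type*) [Field F] [Fintype F] [Field E] [Algebra F E]
    (hF : Fintype.card F = q)
    (Tr : E → E) (hTr : ∀ X, Tr X = X + X ^ q + X ^ q ^ 2)
    (α : E) (hαtr : Tr α = 0) :
    ∀ x y z : F,
      Tr ((algebraMap F E x + algebraMap F E y * α + algebraMap F E z * α ^ q) ^ (q + 1)) =
        (algebraMap F E x) ^ 2 +
          algebraMap F E (y ^ 2 + z ^ 2 + y * z) * Tr (α ^ (q + 1)) := by
  intro x y z
  have : CharP F 2 := charP_of_card_eq_prime_pow (hF.trans hq)
  have : CharP E 2 := charP_of_injective_algebraMap' F 2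
  set φ := iterateFrobenius E 2 m
  have hφ (t : E) : φ t = t ^ q := by rw [iterateFrobenius_def, hq]
  have hTr_eq : Tr = cyclicTrace φ :=
    funext fun t => by rw [hTr, cyclicTrace, hφ, hφ, ← pow_mul, sq]
  have hfix (c : F) : φ (algebraMap F E c) = algebraMap F E c := by
    rw [hφ, ← map_pow, ← hF, FiniteField.pow_card]
  have hpow (t : E) : t ^ (q + 1) = t * φ t := by rw [pow_succ', hφ]
  rw [hpow, hpow, ← hφ α, hTr_eq, cyclicTrace_mul_apply_of_cyclicTrace_eq_zero (hTr_eq ▸ hαtr)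
    (hfix x) (hfix y) (hfix z), map_add, map_add, map_mul, map_pow, map_pow]

theorem stmt_5 (m : ℕ) (hm : 0 < m) (q : ℕ) (hq : q = 2 ^ m)
    (F E : Type*) [Field F] [Fintype F] [Field E] [Fintype E] [Algebra F E]
    (hF : Fintype.card F = q) (hE : Fintype.card E = q ^ 3)
    (Tr : E → E) (hTr : ∀ X, Tr X = X + X ^ q + X ^ q ^ 2)
    (α : E) (hα0 : α ≠ 0) (hαtr : Tr α = 0)
    (hb : ∃ b : Module.Basis (Fin 3) F E, b 0 = 1 ∧ b 1 = α ∧ b 2 = α ^ q) :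
    ∀ x y z : F,
      Tr ((algebraMap F E x + algebraMap F E y * α + algebraMap F E z * α ^ q) ^ (q + 1)) =
        (algebraMap F E x) ^ 2 +
          algebraMap F E (y ^ 2 + z ^ 2 + y * z) * Tr (α ^ (q + 1)) :=
  stmt_5_general m q hq F E hF Tr hTr α hαtr
end

section
/- Let q = 2^m. For every a ∈ F_{q^3}, the cubic equation x³ + x(y² + z² + yz)·Tr(α^{q+1}) + Tr((yα + zα^q)³) = 0 (in the variable x), where y, z ∈ F_q and α is as above, factors as (x + yα + zα^q)(x + yα^q + zα^{q²})(x + yα^{q²} + zα) = 0; hence if (y, z) ≠ (0, 0) it has no solution x ∈ F_q. -/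
/-!
Write `β = yα + zα^q`. Since `Tr α = 0` and `x ↦ x^q` is `F_q`-linear of order 3 on `F_{q^3}`,
the conjugates of `β` are `yα^q + zα^{q²}` and `yα^{q²} + zα`, and they sum to `0`. For three
elements `a, b, c` of sum `0` in characteristic 2 one has `a³ + b³ + c³ = 3abc = abc`, so the
cubic with roots the conjugates of `β` has constant term `Tr(β³)`; its linear coefficient is
`(y² + z² + yz) Tr(α^{q+1})` by direct expansion. For `x ∈ F_q`, rewriting `α^{q²} = -α - α^q`
turns each of `x + β`, `x + β^q`, `x + β^{q²}` into an `F_q`-combination of the basis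
`1, α, α^q` whose `α`- and `α^q`-coefficients vanish only when `y = z = 0`.
-/

section CharTwo

variable {R : Type*} [CommRing R] [CharP R 2]

theorem cubic_eq_of_add_add_eq_zero {a b c : R} (h : a + b + c = 0) (X : R) :
    (X + a) * (X + b) * (X + c) =
      X ^ 3 + X * (a * b + b * c + c * a) + (a ^ 3 + b ^ 3 + c ^ 3) := by
  obtain rfl : c = -(a + b) := by linear_combination h
  linear_combination a * b * (a + b) * CharTwo.two_eq_zero (R := R)

theorem twisted_sum_mul_eq {a₀ a₁ a₂ : R} (h : a₀ + a₁ + a₂ = 0) (y z : R) :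
    (y * a₀ + z * a₁) * (y * a₁ + z * a₂) + (y * a₁ + z * a₂) * (y * a₂ + z * a₀) +
        (y * a₂ + z * a₀) * (y * a₀ + z * a₁) =
      (y ^ 2 + z ^ 2 + y * z) * (a₀ * a₁ + a₁ * a₂ + a₂ * a₀) := by
  obtain rfl : a₂ = -(a₀ + a₁) := by linear_combination h
  linear_combination y * z * (a₀ ^ 2 + a₀ * a₁ + a₁ ^ 2) * CharTwo.two_eq_zero (R := R)

theorem twisted_cubic_eq {a₀ a₁ a₂ : R} (h : a₀ + a₁ + a₂ = 0) (X y z : R) :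
    (X + y * a₀ + z * a₁) * (X + y * a₁ + z * a₂) * (X + y * a₂ + z * a₀) =
      X ^ 3 + X * ((y ^ 2 + z ^ 2 + y * z) * (a₀ * a₁ + a₁ * a₂ + a₂ * a₀)) +
        ((y * a₀ + z * a₁) ^ 3 + (y * a₁ + z * a₂) ^ 3 + (y * a₂ + z * a₀) ^ 3) := by
  have hsum : (y * a₀ + z * a₁) + (y * a₁ + z * a₂) + (y * a₂ + z * a₀) = 0 := by
    linear_combination (y + z) * h
  rw [← twisted_sum_mul_eq h, ← cubic_eq_of_add_add_eq_zero hsum]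
  ring

end CharTwo

section LinearIndependent

variable {F E : Type*} [CommRing F] [CommRing E] [Algebra F E]

theorem algebraMap_add_mul_add_mul_ne_zero {a b : E}
    (hli : LinearIndependent F ![1, a, b]) {y z : F} (hyz : ¬(y = 0 ∧ z = 0)) (x : F) :
    algebraMap F E x + algebraMap F E y * a + algebraMap F E z * b ≠ 0 := by
  intro h
  have := Fintype.linearIndependent_iff.1 hli ![x, y, z]
    (by simpa [Fin.sum_univ_three, Algebra.smul_def] using h)
  exact hyz ⟨this 1, this 2⟩

theorem twisted_product_ne_zero [NoZeroDivisors E] {a₀ a₁ a₂ : E} (h : a₀ + a₁ + a₂ = 0)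
    (hli : LinearIndependent F ![1, a₀, a₁]) {y z : F} (hyz : ¬(y = 0 ∧ z = 0)) (x : F) :
    (algebraMap F E x + algebraMap F E y * a₀ + algebraMap F E z * a₁) *
        (algebraMap F E x + algebraMap F E y * a₁ + algebraMap F E z * a₂) *
        (algebraMap F E x + algebraMap F E y * a₂ + algebraMap F E z * a₀) ≠ 0 := by
  obtain rfl : a₂ = -a₀ - a₁ := by linear_combination h
  refine mul_ne_zero (mul_ne_zero (algebraMap_add_mul_add_mul_ne_zero hli hyz x) ?_) ?_
  · convert algebraMap_add_mul_add_mul_ne_zero hli (y := -z) (z := y - z) (by grind) x using 1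
    simp only [map_neg, map_sub]
    ring
  · convert algebraMap_add_mul_add_mul_ne_zero hli (y := z - y) (z := -y) (by grind) x using 1
    simp only [map_neg, map_sub]
    ring

end LinearIndependent

theorem algebraMap_mul_add_algebraMap_mul_pow_card {F E : Type*} [Field F] [Fintype F]
    [CommRing E] [Algebra F E] {q : ℕ} (hF : Fintype.card F = q) (y z : F) (a b : E) :
    (algebraMap F E y * a + algebraMap F E z * b) ^ q =
      algebraMap F E y * a ^ q + algebraMap F E z * b ^ q := by
  subst hF
  simpa [mul_pow, ← map_pow, FiniteField.pow_card] using
    map_add (FiniteField.frobeniusAlgHom F E) (algebraMap F E y * a) (algebraMap F E z * b)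

theorem pow_pow_sq_of_card_eq_pow_three {E : Type*} [Field E] [Fintype E] {q : ℕ}
    (hE : Fintype.card E = q ^ 3) (x : E) : (x ^ q ^ 2) ^ q = x := by
  rw [← pow_mul, ← pow_succ, ← hE, FiniteField.pow_card]

theorem frobenius_twisted_cubic_eq {F E : Type*} [Field F] [Fintype F] [Field E] [Fintype E]
    [Algebra F E] [CharP E 2] {q : ℕ} (hF : Fintype.card F = q) (hE : Fintype.card E = q ^ 3)
    {Tr : E → E} (hTr : ∀ X, Tr X = X + X ^ q + X ^ q ^ 2) {α : E}
    (hsum : α + α ^ q + α ^ q ^ 2 = 0) (X : E) (y z : F) :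
    (X + algebraMap F E y * α + algebraMap F E z * α ^ q) *
        (X + algebraMap F E y * α ^ q + algebraMap F E z * α ^ q ^ 2) *
        (X + algebraMap F E y * α ^ q ^ 2 + algebraMap F E z * α) =
      X ^ 3 + X * (algebraMap F E (y ^ 2 + z ^ 2 + y * z) * Tr (α ^ (q + 1))) +
        Tr ((algebraMap F E y * α + algebraMap F E z * α ^ q) ^ 3) := by
  have hα₂ : (α ^ q) ^ q = α ^ q ^ 2 := by rw [← pow_mul, sq]
  have hα₃ : (α ^ q ^ 2) ^ q = α := pow_pow_sq_of_card_eq_pow_three hE α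
  have hβ₁ : (algebraMap F E y * α + algebraMap F E z * α ^ q) ^ q =
      algebraMap F E y * α ^ q + algebraMap F E z * α ^ q ^ 2 := by
    rw [algebraMap_mul_add_algebraMap_mul_pow_card hF, hα₂]
  have hβ₂ : (algebraMap F E y * α + algebraMap F E z * α ^ q) ^ q ^ 2 =
      algebraMap F E y * α ^ q ^ 2 + algebraMap F E z * α := by
    rw [sq, pow_mul, hβ₁, algebraMap_mul_add_algebraMap_mul_pow_card hF, ← sq, hα₂, hα₃]
  have hTrα : Tr (α ^ (q + 1)) = α * α ^ q + α ^ q * α ^ q ^ 2 + α ^ q ^ 2 * α := by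
    rw [hTr, pow_succ', mul_pow, mul_pow, hα₂, pow_right_comm α q (q ^ 2), hα₃]
  rw [hTrα, hTr, pow_right_comm _ 3 q, pow_right_comm _ 3 (q ^ 2), hβ₁, hβ₂]
  simp only [map_add, map_mul, map_pow]
  exact twisted_cubic_eq hsum _ _ _

theorem stmt_8_general (m : ℕ) (q : ℕ) (hq : q = 2 ^ m)
    (F E : Type*) [Field F] [Fintype F] [Field E] [Fintype E] [Algebra F E]
    (hF : Fintype.card F = q) (hE : Fintype.card E = q ^ 3)
    (Tr : E → E) (hTr : ∀ X, Tr X = X + X ^ q + X ^ q ^ 2)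
    (α : E) (hαtr : Tr α = 0)
    (hb : ∃ b : Module.Basis (Fin 3) F E, b 0 = 1 ∧ b 1 = α ∧ b 2 = α ^ q) :
    (∀ (X : E) (y z : F),
        (X + algebraMap F E y * α + algebraMap F E z * α ^ q) *
            (X + algebraMap F E y * α ^ q + algebraMap F E z * α ^ q ^ 2) *
            (X + algebraMap F E y * α ^ q ^ 2 + algebraMap F E z * α) =
          X ^ 3 + X * (algebraMap F E (y ^ 2 + z ^ 2 + y * z) * Tr (α ^ (q + 1))) +
            Tr ((algebraMap F E y * α + algebraMap F E z * α ^ q) ^ 3)) ∧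
      ∀ y z : F, ¬(y = 0 ∧ z = 0) → ∀ x : F,
        (algebraMap F E x) ^ 3 +
            algebraMap F E x * (algebraMap F E (y ^ 2 + z ^ 2 + y * z) * Tr (α ^ (q + 1))) +
            Tr ((algebraMap F E y * α + algebraMap F E z * α ^ q) ^ 3) ≠ 0 := by
  have : CharP E 2 := charP_of_card_eq_prime_pow (f := m * 3) (by rw [hE, hq, pow_mul])
  have hsum : α + α ^ q + α ^ q ^ 2 = 0 := hTr α ▸ hαtr
  have hfact := frobenius_twisted_cubic_eq hF hE hTr hsum
  obtain ⟨b, hb₀, hb₁, hb₂⟩ := hb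
  have hli : LinearIndependent F ![1, α, α ^ q] := by
    convert b.linearIndependent
    ext i
    fin_cases i <;> simp [hb₀, hb₁, hb₂]
  refine ⟨hfact, fun y z hyz x => ?_⟩
  rw [← hfact]
  exact twisted_product_ne_zero hsum hli hyz x

theorem stmt_8 (m : ℕ) (hm : 0 < m) (q : ℕ) (hq : q = 2 ^ m)
    (F E : Type*) [Field F] [Fintype F] [Field E] [Fintype E] [Algebra F E]
    (hF : Fintype.card F = q) (hE : Fintype.card E = q ^ 3)
    (Tr : E → E) (hTr : ∀ X, Tr X = X + X ^ q + X ^ q ^ 2)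
    (α : E) (hα0 : α ≠ 0) (hαtr : Tr α = 0)
    (hb : ∃ b : Module.Basis (Fin 3) F E, b 0 = 1 ∧ b 1 = α ∧ b 2 = α ^ q) :
    (∀ (X : E) (y z : F),
        (X + algebraMap F E y * α + algebraMap F E z * α ^ q) *
            (X + algebraMap F E y * α ^ q + algebraMap F E z * α ^ q ^ 2) *
            (X + algebraMap F E y * α ^ q ^ 2 + algebraMap F E z * α) =
          X ^ 3 + X * (algebraMap F E (y ^ 2 + z ^ 2 + y * z) * Tr (α ^ (q + 1))) +
            Tr ((algebraMap F E y * α + algebraMap F E z * α ^ q) ^ 3)) ∧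
      ∀ y z : F, ¬(y = 0 ∧ z = 0) → ∀ x : F,
        (algebraMap F E x) ^ 3 +
            algebraMap F E x * (algebraMap F E (y ^ 2 + z ^ 2 + y * z) * Tr (α ^ (q + 1))) +
            Tr ((algebraMap F E y * α + algebraMap F E z * α ^ q) ^ 3) ≠ 0 :=
  stmt_8_general m q hq F E hF hE Tr hTr α hαtr hb
end

section
/- Let q = 2^m, a, γ ∈ F_q with a² + a + 1 ≠ 0, h : F_{q^3} → F_{q^3} any function, and i, j nonnegative integers. Then f(X) = X + aX^q + γ·Tr(h(X)) is a bijection of F_{q^3} if and only if g(X) = X + aX^q + γ·Tr(h(X) + X^{2^i + 2^j q} + X^{2^i q + 2^j}) is a bijection of F_{q^3}, where Tr = Tr_{F_{q^3}/F_q}. -/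
theorem stmt_10 (m : ℕ) (hm : 0 < m) (q : ℕ) (hq : q = 2 ^ m)
    (F E : Type*) [Field F] [Fintype F] [Field E] [Fintype E] [Algebra F E]
    (hF : Fintype.card F = q) (hE : Fintype.card E = q ^ 3)
    (Tr : E → E) (hTr : ∀ X, Tr X = X + X ^ q + X ^ q ^ 2)
    (a γ : F) (ha : a ^ 2 + a + 1 ≠ 0) (h : E → E) (i j : ℕ) :
    Function.Bijective
        (fun X : E => X + algebraMap F E a * X ^ q + algebraMap F E γ * Tr (h X)) ↔
      Function.Bijective
        (fun X : E => X + algebraMap F E a * X ^ q +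
          algebraMap F E γ *
            Tr (h X + X ^ (2 ^ i + 2 ^ j * q) + X ^ (2 ^ i * q + 2 ^ j))) := by
  -- characteristic 2
  have h2E : (2 : E) = 0 := by
    have hcard : ((Fintype.card E : ℕ) : E) = 0 := FiniteField.cast_card_eq_zero E
    rw [hE, hq] at hcard
    push_cast at hcard
    have h3m : (2 : E) ^ (m * 3) ≠ 0 → False := by
      intro hne; exact hne (by rw [pow_mul]; exact_mod_cast hcard)
    by_contra hne
    exact h3m (pow_ne_zero _ hne)
  haveI hfact : Fact (Nat.Prime 2) := ⟨Nat.prime_two⟩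
  have hrc : ringChar E = 2 := by
    have hdvd : ringChar E ∣ 2 := (CharP.cast_eq_zero_iff E (ringChar E) 2).mp h2E
    have hp : (ringChar E).Prime := CharP.char_is_prime E (ringChar E)
    exact (Nat.prime_dvd_prime_iff_eq hp Nat.prime_two).mp hdvd
  haveI hchar : CharP E 2 := hrc ▸ ringChar.charP E
  -- basic power facts
  have haddp : ∀ (k : ℕ) (x y : E), (x + y) ^ (2 ^ k) = x ^ (2 ^ k) + y ^ (2 ^ k) :=
    fun k x y => add_pow_char_pow x y 2 k
  have haddq : ∀ x y : E, (x + y) ^ q = x ^ q + y ^ q := by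
    intro x y; rw [hq]; exact haddp m x y
  have hfrob : ∀ x : E, ((x ^ q) ^ q) ^ q = x := by
    intro x
    rw [← pow_mul, ← pow_mul, show q * (q * q) = q ^ 3 from by ring, ← hE]
    exact FiniteField.pow_card x
  have hsq : ∀ x : E, x ^ q ^ 2 = (x ^ q) ^ q := by
    intro x; rw [← pow_mul, sq]
  -- fixed elements of the q-power map
  have hAq : (algebraMap F E a) ^ q = algebraMap F E a := by
    rw [← map_pow, ← hF, FiniteField.pow_card]
  have hCq : (algebraMap F E γ) ^ q = algebraMap F E γ := by
    rw [← map_pow, ← hF, FiniteField.pow_card]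
  have hTrq : ∀ x : E, (Tr x) ^ q = Tr x := by
    intro x
    rw [hTr, hsq, haddq, haddq, hfrob]
    ring
  have hTr_add : ∀ x y : E, Tr (x + y) = Tr x + Tr y := by
    intro x y
    rw [hTr, hTr, hTr]
    simp only [hsq, haddq]
    ring
  have hTrfix : ∀ x : E, x ^ q = x → Tr x = x := by
    intro x hx
    rw [hTr, hsq, hx, hx]
    linear_combination x * h2E
  have hTr_smul : ∀ (κ x : E), κ ^ q = κ → Tr (κ * x) = κ * Tr x := by
    intro κ x hκ
    rw [hTr, hTr, hsq, hsq, mul_pow, mul_pow, hκ, hκ]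
    ring
  have hpowfix : ∀ (k : ℕ) (κ : E), κ ^ q = κ → (κ ^ (2 ^ k)) ^ q = κ ^ (2 ^ k) := by
    intro k κ hκ
    rw [pow_right_comm, hκ]
  have hTr_pow2 : ∀ (k : ℕ) (x : E), Tr (x ^ (2 ^ k)) = (Tr x) ^ (2 ^ k) := by
    intro k x
    have hrc2 : ∀ y : E, (y ^ (2 ^ k)) ^ q = (y ^ q) ^ (2 ^ k) := fun y => pow_right_comm y _ _
    rw [hTr, hTr, hsq, hsq, haddp, haddp, hrc2, hrc2]
  -- cross-term trace identity
  have key : ∀ u v : E, Tr (u * v ^ q + u ^ q * v) = Tr u * Tr v + Tr (u * v) := by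
    intro u v
    have hu3 := hfrob u
    have hv3 := hfrob v
    rw [hTr_add, hTr (u * v ^ q), hTr (u ^ q * v), hTr u, hTr v, hTr (u * v),
      hsq, hsq, hsq, hsq, hsq]
    simp only [mul_pow]
    rw [hu3, hv3]
    linear_combination -(u * v + u ^ q * v ^ q + (u ^ q) ^ q * (v ^ q) ^ q) * h2E
  -- invariance of the added trace term under translation by fixed elements
  have hsplit : ∀ Y : E, Y ^ (2 ^ i + 2 ^ j * q) + Y ^ (2 ^ i * q + 2 ^ j)
      = Y ^ (2 ^ i) * (Y ^ (2 ^ j)) ^ q + (Y ^ (2 ^ i)) ^ q * Y ^ (2 ^ j) := by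
    intro Y
    rw [pow_add, pow_add, pow_mul, pow_mul]
  have hinv : ∀ X κ : E, κ ^ q = κ →
      Tr ((X + κ) ^ (2 ^ i + 2 ^ j * q) + (X + κ) ^ (2 ^ i * q + 2 ^ j))
        = Tr (X ^ (2 ^ i + 2 ^ j * q) + X ^ (2 ^ i * q + 2 ^ j)) := by
    intro X κ hκ
    have hα : (κ ^ (2 ^ i)) ^ q = κ ^ (2 ^ i) := hpowfix i κ hκ
    have hβ : (κ ^ (2 ^ j)) ^ q = κ ^ (2 ^ j) := hpowfix j κ hκ
    rw [hsplit, hsplit, key, key, haddp i, haddp j]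
    set u := X ^ (2 ^ i)
    set v := X ^ (2 ^ j)
    set α := κ ^ (2 ^ i)
    set β := κ ^ (2 ^ j)
    have e1 : Tr (u + α) = Tr u + α := by rw [hTr_add, hTrfix α hα]
    have e2 : Tr (v + β) = Tr v + β := by rw [hTr_add, hTrfix β hβ]
    have e3 : Tr ((u + α) * (v + β)) = Tr (u * v) + α * Tr v + β * Tr u + α * β := by
      have : (u + α) * (v + β) = u * v + α * v + β * u + α * β := by ring
      rw [this, hTr_add, hTr_add, hTr_add, hTr_smul α v hα, hTr_smul β u hβ,
        hTrfix (α * β) (by rw [mul_pow, hα, hβ])]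
    rw [e1, e2, e3]
    linear_combination (α * Tr v + β * Tr u + α * β) * h2E
  -- the key cancellation: collisions happen only along q-fixed differences
  have haP : (algebraMap F E a) ^ 2 + algebraMap F E a + 1 ≠ 0 := by
    intro h0
    apply ha
    apply (algebraMap F E).injective
    rw [map_add, map_add, map_pow, map_one, h0, map_zero]
  have hZ : ∀ t : E, t ^ q = t → ∀ Z : E,
      Z + algebraMap F E a * Z ^ q = algebraMap F E γ * t → Z ^ q = Z := by
    intro t ht Z h1
    set A := algebraMap F E a with hA
    set c := algebraMap F E γ with hc
    have h2 : Z ^ q + A * (Z ^ q) ^ q = c * t := by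
      have := congrArg (fun x : E => x ^ q) h1
      simpa only [haddq, mul_pow, hAq, hCq, ht] using this
    have h3 : (Z ^ q) ^ q + A * Z = c * t := by
      have := congrArg (fun x : E => x ^ q) h2
      simpa only [haddq, mul_pow, hAq, hCq, ht, hfrob] using this
    have hkey : (A ^ 2 + A + 1) * Z ^ q = (A ^ 2 + A + 1) * Z := by
      linear_combination (A - 1) * h1 + h2 - A * h3 + (A * (Z ^ q - Z)) * h2E
    exact mul_left_cancel₀ haP hkey
  have hcollapse : ∀ t' : E → E, (∀ X, (t' X) ^ q = t' X) →
      ∀ X Y : E, X + algebraMap F E a * X ^ q + algebraMap F E γ * t' X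
          = Y + algebraMap F E a * Y ^ q + algebraMap F E γ * t' Y →
        (X + Y) ^ q = X + Y := by
    intro t' ht' X Y heq
    apply hZ (t' X + t' Y) (by rw [haddq, ht', ht'])
    rw [haddq]
    linear_combination heq + (Y + algebraMap F E a * Y ^ q - algebraMap F E γ * t' X) * h2E
  -- relating f and g
  have hgf : ∀ X : E,
      X + algebraMap F E a * X ^ q +
          algebraMap F E γ * Tr (h X + X ^ (2 ^ i + 2 ^ j * q) + X ^ (2 ^ i * q + 2 ^ j))
        = (X + algebraMap F E a * X ^ q + algebraMap F E γ * Tr (h X))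
          + algebraMap F E γ * Tr (X ^ (2 ^ i + 2 ^ j * q) + X ^ (2 ^ i * q + 2 ^ j)) := by
    intro X
    rw [add_assoc (h X), hTr_add]
    ring
  -- the trace difference is constant along collisions
  have hDconst : ∀ X Y : E, (X + Y) ^ q = X + Y →
      Tr (X ^ (2 ^ i + 2 ^ j * q) + X ^ (2 ^ i * q + 2 ^ j))
        = Tr (Y ^ (2 ^ i + 2 ^ j * q) + Y ^ (2 ^ i * q + 2 ^ j)) := by
    intro X Y hXY
    have hX : X = Y + (X + Y) := by linear_combination -Y * h2E
    calc Tr (X ^ (2 ^ i + 2 ^ j * q) + X ^ (2 ^ i * q + 2 ^ j))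
        = Tr ((Y + (X + Y)) ^ (2 ^ i + 2 ^ j * q) + (Y + (X + Y)) ^ (2 ^ i * q + 2 ^ j)) := by
          rw [← hX]
      _ = Tr (Y ^ (2 ^ i + 2 ^ j * q) + Y ^ (2 ^ i * q + 2 ^ j)) := hinv Y (X + Y) hXY
  -- finish
  have htf : ∀ X : E, (Tr (h X)) ^ q = Tr (h X) := fun X => hTrq _
  have htg : ∀ X : E,
      (Tr (h X + X ^ (2 ^ i + 2 ^ j * q) + X ^ (2 ^ i * q + 2 ^ j))) ^ q
        = Tr (h X + X ^ (2 ^ i + 2 ^ j * q) + X ^ (2 ^ i * q + 2 ^ j)) := fun X => hTrq _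
  rw [← Finite.injective_iff_bijective, ← Finite.injective_iff_bijective]
  constructor
  · intro hf X Y hgXY
    simp only at hgXY
    have hfix : (X + Y) ^ q = X + Y :=
      hcollapse _ htg X Y hgXY
    have hD := hDconst X Y hfix
    apply hf
    simp only
    have h1 := hgf X
    have h2 := hgf Y
    rw [h1, h2, hD] at hgXY
    exact add_right_cancel hgXY
  · intro hg X Y hfXY
    simp only at hfXY
    have hfix : (X + Y) ^ q = X + Y :=
      hcollapse _ htf X Y hfXY
    have hD := hDconst X Y hfix
    apply hg
    simp only
    rw [hgf X, hgf Y, hfXY, hD]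
end

section
/- Let q = 2^m, a, γ ∈ F_q with a² + a + 1 ≠ 0, h : F_{q^3} → F_{q^3} any function, and i, j nonnegative integers. Then f(X) = X + aX^q + γ·Tr(h(X)) is a bijection of F_{q^3} if and only if g(X) = X + aX^q + γ·Tr(h(X) + X^{2^i + 2^j} + X^{2^i q + 2^j}) is a bijection of F_{q^3}, where Tr = Tr_{F_{q^3}/F_q}. -/
section Aux

variable {E : Type*} [Field E]

/-- local "trace" expression -/
def trc (Q : ℕ) (u : E) : E := u + u ^ Q + (u ^ Q) ^ Q

lemma trc_eq (Q : ℕ) (u : E) : trc Q u = u + u ^ Q + (u ^ Q) ^ Q := rfl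

lemma trc_add {Q : ℕ} (hf : ∀ x y : E, (x + y) ^ Q = x ^ Q + y ^ Q) (u v : E) :
    trc Q (u + v) = trc Q u + trc Q v := by
  simp only [trc, hf]; ring

lemma trc_fix {Q : ℕ} (hf : ∀ x y : E, (x + y) ^ Q = x ^ Q + y ^ Q)
    (hc : ∀ x : E, ((x ^ Q) ^ Q) ^ Q = x) (u : E) :
    (trc Q u) ^ Q = trc Q u := by
  simp only [trc, hf, hc]; ring

lemma trc_frob {Q : ℕ} (hc : ∀ x : E, ((x ^ Q) ^ Q) ^ Q = x) (u : E) :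
    trc Q (u ^ Q) = trc Q u := by
  simp only [trc, hc]; ring

lemma trc_smul {Q : ℕ} (c u : E) (hcq : c ^ Q = c) :
    trc Q (c * u) = c * trc Q u := by
  simp only [trc, mul_pow, hcq]; ring

lemma delta_fix {Q : ℕ} (two_eq : (2 : E) = 0)
    (hf : ∀ x y : E, (x + y) ^ Q = x ^ Q + y ^ Q)
    (hc : ∀ x : E, ((x ^ Q) ^ Q) ^ Q = x)
    (a δ : E) (ha : a ^ 2 + a + 1 ≠ 0) (haq : a ^ Q = a)
    (hs : (δ + a * δ ^ Q) ^ Q = δ + a * δ ^ Q) : δ ^ Q = δ := by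
  have hs1 : δ ^ Q + a * (δ ^ Q) ^ Q = δ + a * δ ^ Q := by
    rw [← hs, hf, mul_pow, haq]
  have hs2 : (δ ^ Q) ^ Q + a * δ = δ ^ Q + a * (δ ^ Q) ^ Q := by
    have h3 := congrArg (· ^ Q) hs1
    rw [hf, mul_pow, haq, hc] at h3
    rw [hf, mul_pow, haq] at h3
    exact h3
  have key : (a ^ 2 + a + 1) * (δ - (δ ^ Q) ^ Q) = 0 := by
    linear_combination (-1 : E) * hs1 + (a - 1) * hs2 +
      (a * δ - a * (δ ^ Q) ^ Q) * two_eq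
  have h0 : δ - (δ ^ Q) ^ Q = 0 := by
    rcases mul_eq_zero.mp key with h | h
    · exact absurd h ha
    · exact h
  have hw : (δ ^ Q) ^ Q = δ := by linear_combination -h0
  have := congrArg (· ^ Q) hw
  rw [hc] at this
  exact this.symm

lemma trc_shift {Q i j : ℕ} (two_eq : (2 : E) = 0)
    (hf : ∀ x y : E, (x + y) ^ Q = x ^ Q + y ^ Q)
    (h2 : ∀ (n : ℕ) (x y : E), (x + y) ^ 2 ^ n = x ^ 2 ^ n + y ^ 2 ^ n)
    (hc : ∀ x : E, ((x ^ Q) ^ Q) ^ Q = x)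
    (X c : E) (hcq : c ^ Q = c) :
    trc Q ((X + c) ^ (2 ^ i + 2 ^ j) + (X + c) ^ (2 ^ i * Q + 2 ^ j)) =
      trc Q (X ^ (2 ^ i + 2 ^ j) + X ^ (2 ^ i * Q + 2 ^ j)) := by
  have hα : (c ^ 2 ^ i) ^ Q = c ^ 2 ^ i := by rw [pow_right_comm, hcq]
  have hβ : (c ^ 2 ^ j) ^ Q = c ^ 2 ^ j := by rw [pow_right_comm, hcq]
  have key : ∀ Z : E, Z ^ (2 ^ i + 2 ^ j) + Z ^ (2 ^ i * Q + 2 ^ j) =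
      Z ^ 2 ^ i * Z ^ 2 ^ j + (Z ^ 2 ^ i) ^ Q * Z ^ 2 ^ j := by
    intro Z; rw [pow_add, pow_add, pow_mul]
  rw [key (X + c), key X, h2 i, h2 j, hf, hα]
  set A := X ^ 2 ^ i with hA
  set B := X ^ 2 ^ j with hB
  set α := c ^ 2 ^ i with hα'
  set β := c ^ 2 ^ j with hβ'
  have expand : (A + α) * (B + β) + (A ^ Q + α) * (B + β) =
      (A * B + A ^ Q * B) + β * (A + A ^ Q) := by
    linear_combination (α * B + α * β) * two_eq
  rw [expand, trc_add hf]
  have hz : trc Q (β * (A + A ^ Q)) = 0 := by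
    rw [trc_smul _ _ hβ, trc_add hf, trc_frob hc]
    linear_combination β * trc Q A * two_eq
  rw [hz, add_zero]

end Aux

theorem stmt_11 (m : ℕ) (hm : 0 < m) (q : ℕ) (hq : q = 2 ^ m)
    (F E : Type*) [Field F] [Fintype F] [Field E] [Fintype E] [Algebra F E]
    (hF : Fintype.card F = q) (hE : Fintype.card E = q ^ 3)
    (Tr : E → E) (hTr : ∀ X, Tr X = X + X ^ q + X ^ q ^ 2)
    (a γ : F) (ha : a ^ 2 + a + 1 ≠ 0) (h : E → E) (i j : ℕ) :
    Function.Bijective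
        (fun X : E => X + algebraMap F E a * X ^ q + algebraMap F E γ * Tr (h X)) ↔
      Function.Bijective
        (fun X : E => X + algebraMap F E a * X ^ q +
          algebraMap F E γ *
            Tr (h X + X ^ (2 ^ i + 2 ^ j) + X ^ (2 ^ i * q + 2 ^ j))) := by
  subst hq
  set Q : ℕ := 2 ^ m with hQ
  -- characteristic 2
  haveI : CharP F (ringChar F) := ringChar.charP F
  obtain ⟨n, hprime, hcard⟩ := FiniteField.card F (ringChar F)
  have hP2 : ringChar F = 2 := by
    have hdvd : ringChar F ∣ Q := by
      rw [← hF, hcard]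
      exact dvd_pow_self _ n.ne_zero
    rw [hQ] at hdvd
    exact (Nat.prime_dvd_prime_iff_eq hprime Nat.prime_two).mp
      (hprime.dvd_of_dvd_pow hdvd)
  haveI hF2 : CharP F 2 := hP2 ▸ ringChar.charP F
  haveI hE2 : CharP E 2 := charP_of_injective_algebraMap (algebraMap F E).injective 2
  haveI : Fact (Nat.Prime 2) := ⟨Nat.prime_two⟩
  have two_eq : (2 : E) = 0 := by exact_mod_cast CharP.cast_eq_zero E 2
  -- Frobenius facts
  have frob2 : ∀ (n : ℕ) (x y : E), (x + y) ^ 2 ^ n = x ^ 2 ^ n + y ^ 2 ^ n :=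
    fun n x y => add_pow_char_pow x y 2 n
  have frob_add : ∀ x y : E, (x + y) ^ Q = x ^ Q + y ^ Q := by
    intro x y; rw [hQ]; exact frob2 m x y
  have frob_sub : ∀ x y : E, (x - y) ^ Q = x ^ Q - y ^ Q := by
    intro x y
    have hxy := frob_add (x - y) y
    rw [sub_add_cancel] at hxy
    linear_combination -hxy
  have cube : ∀ x : E, ((x ^ Q) ^ Q) ^ Q = x := by
    intro x
    have h1 : ((x ^ Q) ^ Q) ^ Q = x ^ Q ^ 3 := by
      rw [← pow_mul, ← pow_mul]
      congr 1
      ring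
    rw [h1, ← hE, FiniteField.pow_card]
  have aFix : ∀ b : F, (algebraMap F E b) ^ Q = algebraMap F E b := by
    intro b
    rw [← map_pow]
    congr 1
    rw [← hF, FiniteField.pow_card]
  have hTr' : ∀ u : E, Tr u = trc Q u := by
    intro u
    rw [hTr u, trc_eq, pow_two, pow_mul]
  set a' := algebraMap F E a with ha'def
  set γ' := algebraMap F E γ with hγ'def
  have haq : a' ^ Q = a' := aFix a
  have hγq : γ' ^ Q = γ' := aFix γ
  have ha'' : a' ^ 2 + a' + 1 ≠ 0 := by
    intro hcon
    apply ha
    apply (algebraMap F E).injective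
    rw [map_add, map_add, map_pow, map_one, map_zero]
    exact hcon
  -- core: any collision forces δ fixed by Frobenius
  have core : ∀ (H : E → E) (X Y : E),
      X + a' * X ^ Q + γ' * Tr (H X) = Y + a' * Y ^ Q + γ' * Tr (H Y) →
      (X - Y) ^ Q = X - Y := by
    intro H X Y hEq
    have hδ : (X - Y) + a' * (X - Y) ^ Q = γ' * (Tr (H Y) - Tr (H X)) := by
      rw [frob_sub]
      linear_combination hEq
    have hsfix : ((X - Y) + a' * (X - Y) ^ Q) ^ Q = (X - Y) + a' * (X - Y) ^ Q := by
      rw [hδ, mul_pow, hγq, frob_sub, hTr' (H Y), hTr' (H X),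
        trc_fix frob_add cube, trc_fix frob_add cube]
    exact delta_fix two_eq frob_add cube a' (X - Y) ha'' haq hsfix
  have shift : ∀ X Y : E, (X - Y) ^ Q = X - Y →
      trc Q (X ^ (2 ^ i + 2 ^ j) + X ^ (2 ^ i * Q + 2 ^ j)) =
        trc Q (Y ^ (2 ^ i + 2 ^ j) + Y ^ (2 ^ i * Q + 2 ^ j)) := by
    intro X Y hc
    have hXY : X = Y + (X - Y) := by ring
    calc trc Q (X ^ (2 ^ i + 2 ^ j) + X ^ (2 ^ i * Q + 2 ^ j))
        = trc Q ((Y + (X - Y)) ^ (2 ^ i + 2 ^ j) + (Y + (X - Y)) ^ (2 ^ i * Q + 2 ^ j)) := by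
          rw [← hXY]
      _ = trc Q (Y ^ (2 ^ i + 2 ^ j) + Y ^ (2 ^ i * Q + 2 ^ j)) :=
          trc_shift two_eq frob_add frob2 cube Y (X - Y) hc
  have gTr : ∀ X : E, Tr (h X + X ^ (2 ^ i + 2 ^ j) + X ^ (2 ^ i * Q + 2 ^ j)) =
      Tr (h X) + trc Q (X ^ (2 ^ i + 2 ^ j) + X ^ (2 ^ i * Q + 2 ^ j)) := by
    intro X
    rw [hTr', hTr', add_assoc, trc_add frob_add]
  have dir1 : ∀ X Y : E,
      X + a' * X ^ Q + γ' * Tr (h X) = Y + a' * Y ^ Q + γ' * Tr (h Y) →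
      X + a' * X ^ Q + γ' * Tr (h X + X ^ (2 ^ i + 2 ^ j) + X ^ (2 ^ i * Q + 2 ^ j)) =
        Y + a' * Y ^ Q + γ' * Tr (h Y + Y ^ (2 ^ i + 2 ^ j) + Y ^ (2 ^ i * Q + 2 ^ j)) := by
    intro X Y hf
    have hc := core h X Y hf
    have hs := shift X Y hc
    rw [gTr X, gTr Y, hs]
    linear_combination hf
  have dir2 : ∀ X Y : E,
      X + a' * X ^ Q + γ' * Tr (h X + X ^ (2 ^ i + 2 ^ j) + X ^ (2 ^ i * Q + 2 ^ j)) =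
        Y + a' * Y ^ Q + γ' * Tr (h Y + Y ^ (2 ^ i + 2 ^ j) + Y ^ (2 ^ i * Q + 2 ^ j)) →
      X + a' * X ^ Q + γ' * Tr (h X) = Y + a' * Y ^ Q + γ' * Tr (h Y) := by
    intro X Y hg
    have hc := core (fun Z => h Z + Z ^ (2 ^ i + 2 ^ j) + Z ^ (2 ^ i * Q + 2 ^ j)) X Y hg
    have hs := shift X Y hc
    rw [gTr X, gTr Y, hs] at hg
    linear_combination hg
  rw [← Finite.injective_iff_bijective, ← Finite.injective_iff_bijective]
  constructor
  · intro H X Y hxy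
    exact H (dir2 X Y hxy)
  · intro H X Y hxy
    exact H (dir1 X Y hxy)
end

section
/- Let q = 2^m and γ ∈ F_q. Then f(X) = X + γ·Tr_{F_{q^3}/F_q}(X^{(q+1)/2} + X^{(q²+q+2)/2}) is a permutation of F_{q^3} if and only if γ = 0 or γ = 1. -/
/-- The half-exponents are interpreted via the substitution `X ↦ X²` (a bijection of
`F_{q^3}` in characteristic 2): `f(X²) = X² + γ·Tr(X^{q+1} + X^{q²+q+2})`. -/
theorem stmt_12 (m : ℕ) (hm : 0 < m) (q : ℕ) (hq : q = 2 ^ m)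
    (F E : Type*) [Field F] [Fintype F] [Field E] [Fintype E] [Algebra F E]
    (hF : Fintype.card F = q) (hE : Fintype.card E = q ^ 3)
    (Tr : E → E) (hTr : ∀ X, Tr X = X + X ^ q + X ^ q ^ 2)
    (γ : F) :
    Function.Bijective
        (fun X : E => X ^ 2 +
          algebraMap F E γ * Tr (X ^ (q + 1) + X ^ (q ^ 2 + q + 2))) ↔
      γ = 0 ∨ γ = 1 := by
  have hq0 : q ≠ 0 := by rw [hq]; positivity
  have h2E : (2 : E) = 0 := by
    have hc := FiniteField.cast_card_eq_zero E
    rw [hE, hq] at hc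
    push_cast at hc
    rw [← pow_mul] at hc
    exact (pow_eq_zero_iff (by omega)).mp hc
  have h2F : (2 : F) = 0 := by
    have hc := FiniteField.cast_card_eq_zero F
    rw [hF, hq] at hc
    push_cast at hc
    exact (pow_eq_zero_iff (by omega)).mp hc
  haveI : Fact (Nat.Prime 2) := ⟨Nat.prime_two⟩
  haveI : CharP E 2 := (CharP.charP_iff_prime_eq_zero Nat.prime_two).mpr h2E
  have hadd : ∀ a b : E, (a + b) ^ q = a ^ q + b ^ q := by
    intro a b; rw [hq]; exact add_pow_char_pow ..
  have powq3 : ∀ x : E, x ^ q ^ 3 = x := by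
    intro x; rw [← hE]; exact FiniteField.pow_card x
  have hb3 : ∀ a : E, ((a ^ q) ^ q) ^ q = a := by
    intro a
    rw [← pow_mul, ← pow_mul, show q * (q * q) = q ^ 3 by ring]
    exact powq3 a
  have hq2 : ∀ a : E, a ^ q ^ 2 = (a ^ q) ^ q := by
    intro a; rw [show q ^ 2 = q * q by ring, pow_mul]
  have hmulq : ∀ a b : E, (a * b) ^ q = a ^ q * b ^ q := fun a b => mul_pow a b q
  have hsqq : ∀ a : E, (a ^ 2) ^ q = (a ^ q) ^ 2 := by
    intro a; rw [← pow_mul, mul_comm, pow_mul]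
  have h4q : ∀ a : E, (a ^ 4) ^ q = (a ^ q) ^ 4 := by
    intro a; rw [← pow_mul, mul_comm, pow_mul]
  have hTrq : ∀ z : E, (Tr z) ^ q = Tr z := by
    intro z
    rw [hTr, hq2 z]
    simp only [hadd]
    rw [hb3 z]
    ring
  have hTrExp : ∀ x : E, Tr (x ^ (q + 1) + x ^ (q ^ 2 + q + 2)) =
      x * x ^ q + x ^ q * (x ^ q) ^ q + (x ^ q) ^ q * x
        + x * x ^ q * (x ^ q) ^ q * (x + x ^ q + (x ^ q) ^ q) := by
    intro x
    have hZ : x ^ (q + 1) + x ^ (q ^ 2 + q + 2)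
        = x * x ^ q + (x ^ q) ^ q * (x ^ q * x ^ 2) := by
      rw [pow_add, pow_add, pow_add, pow_one, hq2 x]; ring
    rw [hTr, hq2 (x ^ (q + 1) + x ^ (q ^ 2 + q + 2)), hZ]
    simp only [hadd, hmulq, hsqq, hb3]
    ring
  constructor
  · -- bijective → γ = 0 ∨ γ = 1
    intro hbij
    by_contra hcon
    push_neg at hcon
    obtain ⟨hγ0, hγ1⟩ := hcon
    have hγne : (1 : F) + γ ≠ 0 := by
      intro h0
      apply hγ1
      linear_combination h0 - h2F
    have hsq_inj : Function.Injective (fun t : F => t ^ 2) := by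
      intro a b hab
      simp only at hab
      have hz : (a - b) ^ 2 = 0 := by
        linear_combination hab + (b ^ 2 - a * b) * h2F
      exact sub_eq_zero.mp ((pow_eq_zero_iff (two_ne_zero)).mp hz)
    have hsq_surj := Finite.injective_iff_surjective.mp hsq_inj
    obtain ⟨t, ht⟩ := hsq_surj ((1 + γ) / γ)
    simp only at ht
    have htne : t ≠ 0 := by
      intro h0
      rw [h0] at ht
      apply hγne
      have h1 : (1 + γ) / γ = 0 := by rw [← ht]; norm_num
      exact (div_eq_zero_iff.mp h1).resolve_right hγ0
    have hkey : γ * t ^ 2 = 1 + γ := by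
      rw [ht]; field_simp
    have htF : t ^ q = t := by rw [← hF]; exact FiniteField.pow_card t
    set t₀ := algebraMap F E t with ht₀
    have htq : t₀ ^ q = t₀ := by rw [ht₀, ← map_pow, htF]
    have e1 : t₀ ^ (q + 1) + t₀ ^ (q ^ 2 + q + 2) = t₀ ^ 2 + t₀ ^ 4 := by
      rw [pow_add, pow_add, pow_add, pow_one, hq2 t₀]
      simp only [htq]
      ring
    have e2 : Tr (t₀ ^ 2 + t₀ ^ 4) = t₀ ^ 2 + t₀ ^ 4 := by
      rw [hTr, hq2 (t₀ ^ 2 + t₀ ^ 4)]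
      simp only [hadd, hsqq, h4q, htq]
      linear_combination (t₀ ^ 2 + t₀ ^ 4) * h2E
    have harg : t ^ 2 + γ * (t ^ 2 + t ^ 4) = 0 := by
      linear_combination (t ^ 2 + 2) * hkey + (t ^ 2 + 1 + γ) * h2F
    have hTr0 : Tr 0 = 0 := by
      rw [hTr, zero_pow hq0, zero_pow (pow_ne_zero 2 hq0)]
      ring
    have hft : (fun X : E => X ^ 2 +
          algebraMap F E γ * Tr (X ^ (q + 1) + X ^ (q ^ 2 + q + 2))) t₀
        = (fun X : E => X ^ 2 +
          algebraMap F E γ * Tr (X ^ (q + 1) + X ^ (q ^ 2 + q + 2))) 0 := by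
      simp only
      rw [e1, e2, zero_pow (by omega : q + 1 ≠ 0),
        zero_pow (by omega : q ^ 2 + q + 2 ≠ 0), zero_add, hTr0, mul_zero, add_zero]
      rw [ht₀]
      have hmap := congrArg (algebraMap F E) harg
      rw [map_zero] at hmap
      simp only [map_add, map_mul, map_pow] at hmap
      linear_combination hmap
    have := hbij.injective hft
    rw [ht₀] at this
    have h00 : (0 : E) = algebraMap F E 0 := by rw [map_zero]
    rw [h00] at this
    exact htne ((algebraMap F E).injective this)
  · rintro (rfl | rfl)
    · -- γ = 0
      simp only [map_zero, zero_mul, add_zero]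
      refine Finite.injective_iff_bijective.mp ?_
      intro a b hab
      simp only at hab
      have hz : (a - b) ^ 2 = 0 := by
        linear_combination hab + (b ^ 2 - a * b) * h2E
      exact sub_eq_zero.mp ((pow_eq_zero_iff (two_ne_zero)).mp hz)
    · -- γ = 1
      simp only [map_one, one_mul]
      refine Finite.injective_iff_bijective.mp ?_
      intro X Y h
      simp only at h
      have e0 : X ^ 2 + Y ^ 2
          = Tr (X ^ (q + 1) + X ^ (q ^ 2 + q + 2))
            + Tr (Y ^ (q + 1) + Y ^ (q ^ 2 + q + 2)) := by
        linear_combination h + (Y ^ 2 - Tr (X ^ (q + 1) + X ^ (q ^ 2 + q + 2))) * h2E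
      have hsq : (X ^ 2 + Y ^ 2) ^ q = X ^ 2 + Y ^ 2 := by
        rw [e0, hadd, hTrq, hTrq]
      have g1 : (X ^ q) ^ 2 + (Y ^ q) ^ 2 = X ^ 2 + Y ^ 2 := by
        rw [← hsqq, ← hsqq, ← hadd]; exact hsq
      have h6 : (X ^ q + Y ^ q + (X + Y)) ^ 2 = 0 := by
        linear_combination g1 + (X ^ 2 + Y ^ 2 + X ^ q * Y ^ q + X ^ q * X + X ^ q * Y
          + Y ^ q * X + Y ^ q * Y + X * Y) * h2E
      have h7 : X ^ q + Y ^ q + (X + Y) = 0 := (pow_eq_zero_iff (two_ne_zero)).mp h6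
      have hD : X ^ q + Y ^ q = X + Y := by linear_combination h7 - (X + Y) * h2E
      have hDq : (X + Y) ^ q = X + Y := by rw [hadd]; exact hD
      have hXq : X ^ q = Y ^ q + (X + Y) := by linear_combination hD - Y ^ q * h2E
      have hXqq : (X ^ q) ^ q = (Y ^ q) ^ q + (X + Y) := by rw [hXq, hadd, hDq]
      rw [hTrExp X, hTrExp Y, hXqq, hXq] at h
      have hprod : (X + Y) * (((X + Y) + (Y + Y ^ q)) *
          (((X + Y) + (Y ^ q + (Y ^ q) ^ q)) * ((X + Y) + ((Y ^ q) ^ q + Y)))) = 0 := by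
        linear_combination h + ((1)*Y*(Y^q)*((Y^q)^q)^2 + (1)*Y*(Y^q)^2*((Y^q)^q)
          + (1)*Y^2*((Y^q)^q)^2 + (3)*Y^2*(Y^q)*((Y^q)^q) + (1)*Y^2*(Y^q)^2
          + (3)*Y^3*((Y^q)^q) + (3)*Y^3*(Y^q) + (2)*Y^4 + (-1)*X*((Y^q)^q)
          + (-1)*X*(Y^q) + (-2)*X*Y + (1)*X*Y*((Y^q)^q)^2 + (2)*X*Y*(Y^q)*((Y^q)^q)
          + (1)*X*Y*(Y^q)^2 + (5)*X*Y^2*((Y^q)^q) + (5)*X*Y^2*(Y^q) + (5)*X*Y^3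
          + (-2)*X^2 + (-1)*X^2*(Y^q)*((Y^q)^q) + (1)*X^2*Y*((Y^q)^q)
          + (1)*X^2*Y*(Y^q) + (3)*X^2*Y^2 + (-1)*X^3*((Y^q)^q) + (-1)*X^3*(Y^q)
          + (-1)*X^3*Y + (-1)*X^4) * h2E
      have hpow : ∀ u v : E, X + Y = u + v → X + Y = u ^ q + v ^ q := by
        intro u v huv
        rw [← hDq, huv, hadd]
      have hYb3 : ((Y ^ q) ^ q) ^ q = Y := hb3 Y
      rcases mul_eq_zero.mp hprod with hD0 | hrest
      · linear_combination hD0 - Y * h2E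
      rcases mul_eq_zero.mp hrest with h3 | hrest2
      · have e1 : X + Y = Y + Y ^ q := by linear_combination h3 - (Y + Y ^ q) * h2E
        have e2 := hpow _ _ e1
        have e3 := hpow _ _ e2
        rw [hYb3] at e3
        linear_combination e1 + e2 + e3 + (Y ^ q + (Y ^ q) ^ q - X - Y) * h2E
      rcases mul_eq_zero.mp hrest2 with h4 | h5
      · have e2 : X + Y = Y ^ q + (Y ^ q) ^ q := by
          linear_combination h4 - (Y ^ q + (Y ^ q) ^ q) * h2E
        have e3 := hpow _ _ e2
        rw [hYb3] at e3
        have e1 := hpow _ _ e3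
        rw [hYb3] at e1
        linear_combination e1 + e2 + e3 + (Y ^ q + (Y ^ q) ^ q - X - Y) * h2E
      · have e3 : X + Y = (Y ^ q) ^ q + Y := by
          linear_combination h5 - ((Y ^ q) ^ q + Y) * h2E
        have e1 := hpow _ _ e3
        rw [hYb3] at e1
        have e2 := hpow _ _ e1
        linear_combination e1 + e2 + e3 + (Y ^ q + (Y ^ q) ^ q - X - Y) * h2E
end

section
/- Let q = 2^m. For every positive integer j, the map f(X) = X + Tr_{F_{q^3}/F_q}(X^{(q+1)/2} + X^{(q²+q+2)·2^{j-1}}) is a permutation of F_{q^3}. -/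
/-- The half-exponents are interpreted via the substitution `X ↦ X²`:
`f(X²) = X² + Tr(X^{q+1} + X^{(q²+q+2)·2^j})`. -/
theorem stmt_13 (m : ℕ) (hm : 0 < m) (q : ℕ) (hq : q = 2 ^ m)
    (F E : Type*) [Field F] [Fintype F] [Field E] [Fintype E] [Algebra F E]
    (hF : Fintype.card F = q) (hE : Fintype.card E = q ^ 3)
    (Tr : E → E) (hTr : ∀ X, Tr X = X + X ^ q + X ^ q ^ 2)
    (j : ℕ) (hj : 0 < j) :
    Function.Bijective
      (fun X : E => X ^ 2 + Tr (X ^ (q + 1) + X ^ ((q ^ 2 + q + 2) * 2 ^ j))) := by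
  classical
  -- characteristic 2
  have hcharE : CharP E (ringChar E) := ringChar.charP E
  have hprime : (ringChar E).Prime := CharP.char_is_prime E (ringChar E)
  have hdvd : ringChar E ∣ 2 ^ (m * 3) := by
    have h0 : ((Fintype.card E : ℕ) : E) = 0 := FiniteField.cast_card_eq_zero E
    rw [hE, hq, ← pow_mul] at h0
    exact (CharP.cast_eq_zero_iff E (ringChar E) _).mp h0
  have hchar2 : ringChar E = 2 := by
    have := hprime.dvd_of_dvd_pow hdvd
    exact (Nat.prime_dvd_prime_iff_eq hprime Nat.prime_two).mp this
  have hchar : CharP E 2 := hchar2 ▸ hcharE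
  haveI : Fact (Nat.Prime 2) := ⟨Nat.prime_two⟩
  have htwo : (2 : E) = 0 := by
    have := (CharP.cast_eq_zero E 2 : ((2 : ℕ) : E) = 0)
    simpa using this
  -- Frobenius facts
  have haddq : ∀ x y : E, (x + y) ^ q = x ^ q + y ^ q := by
    intro x y; rw [hq]; exact add_pow_char_pow x y 2 m
  have haddj : ∀ x y : E, (x + y) ^ 2 ^ j = x ^ 2 ^ j + y ^ 2 ^ j := by
    intro x y; exact add_pow_char_pow x y 2 j
  have hq3 : ∀ x : E, ((x ^ q) ^ q) ^ q = x := by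
    intro x
    rw [← pow_mul, ← pow_mul, show q * (q * q) = q ^ 3 by ring, ← hE]
    exact FiniteField.pow_card x
  -- normal form of f
  have hform : ∀ Z : E,
      Z ^ 2 + Tr (Z ^ (q + 1) + Z ^ ((q ^ 2 + q + 2) * 2 ^ j)) =
      Z ^ 2 + (Z ^ q * Z + (Z ^ q) ^ q * Z ^ q + Z * (Z ^ q) ^ q)
        + ((Z * Z ^ q * (Z ^ q) ^ q) * (Z + Z ^ q + (Z ^ q) ^ q)) ^ 2 ^ j := by
    intro Z
    have e1 : Z ^ (q + 1) = Z ^ q * Z := by rw [pow_add, pow_one]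
    have e2 : Z ^ ((q ^ 2 + q + 2) * 2 ^ j) = ((Z ^ q) ^ q * Z ^ q * Z ^ 2) ^ 2 ^ j := by
      rw [pow_mul, pow_add, pow_add, show q ^ 2 = q * q from sq q, pow_mul]
    have hA : Z ^ (q + 1) + Z ^ ((q ^ 2 + q + 2) * 2 ^ j)
        = Z ^ q * Z + ((Z ^ q) ^ q * Z ^ q * Z ^ 2) ^ 2 ^ j := by rw [e1, e2]
    rw [hTr, hA]
    have hAq : (Z ^ q * Z + ((Z ^ q) ^ q * Z ^ q * Z ^ 2) ^ 2 ^ j) ^ q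
        = (Z ^ q) ^ q * Z ^ q + (Z * (Z ^ q) ^ q * (Z ^ q) ^ 2) ^ 2 ^ j := by
      rw [haddq, pow_right_comm _ (2 ^ j) q]
      simp only [mul_pow]
      rw [hq3, pow_right_comm Z 2 q]
    have hAq2 : ((Z ^ q) ^ q * Z ^ q + (Z * (Z ^ q) ^ q * (Z ^ q) ^ 2) ^ 2 ^ j) ^ q
        = Z * (Z ^ q) ^ q + (Z ^ q * Z * ((Z ^ q) ^ q) ^ 2) ^ 2 ^ j := by
      rw [haddq, pow_right_comm _ (2 ^ j) q]
      simp only [mul_pow]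
      rw [hq3, pow_right_comm (Z ^ q) 2 q]
    rw [show (Z ^ q * Z + ((Z ^ q) ^ q * Z ^ q * Z ^ 2) ^ 2 ^ j) ^ q ^ 2
        = ((Z ^ q * Z + ((Z ^ q) ^ q * Z ^ q * Z ^ 2) ^ 2 ^ j) ^ q) ^ q by
      rw [sq q, pow_mul], hAq, hAq2]
    have hsum : ((Z ^ q) ^ q * Z ^ q * Z ^ 2) ^ 2 ^ j + (Z * (Z ^ q) ^ q * (Z ^ q) ^ 2) ^ 2 ^ j
        + (Z ^ q * Z * ((Z ^ q) ^ q) ^ 2) ^ 2 ^ j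
        = ((Z * Z ^ q * (Z ^ q) ^ q) * (Z + Z ^ q + (Z ^ q) ^ q)) ^ 2 ^ j := by
      rw [← haddj, ← haddj]
      ring_nf
    linear_combination hsum
  -- injectivity suffices
  rw [← Finite.injective_iff_bijective]
  intro X Y h
  simp only [hform] at h
  set a : E := X + Y with ha
  -- a is fixed by Frobenius
  have hadd2 : ∀ x y : E, (x + y) ^ 2 = x ^ 2 + y ^ 2 := by
    intro x y; linear_combination (x * y) * htwo
  have hSfixX : (X + X ^ q + (X ^ q) ^ q) ^ q = X + X ^ q + (X ^ q) ^ q := by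
    rw [haddq, haddq, hq3]; ring
  have hSfixY : (Y + Y ^ q + (Y ^ q) ^ q) ^ q = Y + Y ^ q + (Y ^ q) ^ q := by
    rw [haddq, haddq, hq3]; ring
  have hσX : (X ^ q * X + (X ^ q) ^ q * X ^ q + X * (X ^ q) ^ q) ^ q
      = X ^ q * X + (X ^ q) ^ q * X ^ q + X * (X ^ q) ^ q := by
    rw [haddq, haddq, mul_pow, mul_pow, mul_pow, hq3]; ring
  have hσY : (Y ^ q * Y + (Y ^ q) ^ q * Y ^ q + Y * (Y ^ q) ^ q) ^ q
      = Y ^ q * Y + (Y ^ q) ^ q * Y ^ q + Y * (Y ^ q) ^ q := by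
    rw [haddq, haddq, mul_pow, mul_pow, mul_pow, hq3]; ring
  have hBX : (((X * X ^ q * (X ^ q) ^ q) * (X + X ^ q + (X ^ q) ^ q)) ^ 2 ^ j) ^ q
      = ((X * X ^ q * (X ^ q) ^ q) * (X + X ^ q + (X ^ q) ^ q)) ^ 2 ^ j := by
    rw [pow_right_comm]
    simp only [mul_pow]
    rw [hq3, hSfixX]
    ring
  have hBY : (((Y * Y ^ q * (Y ^ q) ^ q) * (Y + Y ^ q + (Y ^ q) ^ q)) ^ 2 ^ j) ^ q
      = ((Y * Y ^ q * (Y ^ q) ^ q) * (Y + Y ^ q + (Y ^ q) ^ q)) ^ 2 ^ j := by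
    rw [pow_right_comm]
    simp only [mul_pow]
    rw [hq3, hSfixY]
    ring
  -- t := the trace-parts sum, fixed by Frobenius
  have ea : a ^ 2 =
      (X ^ q * X + (X ^ q) ^ q * X ^ q + X * (X ^ q) ^ q)
      + ((X * X ^ q * (X ^ q) ^ q) * (X + X ^ q + (X ^ q) ^ q)) ^ 2 ^ j
      + ((Y ^ q * Y + (Y ^ q) ^ q * Y ^ q + Y * (Y ^ q) ^ q)
      + ((Y * Y ^ q * (Y ^ q) ^ q) * (Y + Y ^ q + (Y ^ q) ^ q)) ^ 2 ^ j) := by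
    rw [ha]
    linear_combination h + (X * Y + Y ^ 2
      - (X ^ q * X + (X ^ q) ^ q * X ^ q + X * (X ^ q) ^ q)
      - ((X * X ^ q * (X ^ q) ^ q) * (X + X ^ q + (X ^ q) ^ q)) ^ 2 ^ j) * htwo
  have ha2q : (a ^ 2) ^ q = a ^ 2 := by
    rw [ea]
    simp only [haddq]
    rw [hBX, hBY]
    simp only [mul_pow, hq3]
    ring
  have haq0 : (a ^ q + a) ^ 2 = 0 := by
    rw [hadd2, pow_right_comm a q 2, ha2q]
    linear_combination a ^ 2 * htwo
  have haq : a ^ q = a := by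
    have h0 : a ^ q + a = 0 := by
      have := pow_eq_zero_iff (two_ne_zero) |>.mp haq0
      exact this
    linear_combination h0 - a * htwo
  -- express Y in terms of X and a
  have hy0 : Y = X + a := by rw [ha]; linear_combination (-X) * htwo
  have hy1 : Y ^ q = X ^ q + a := by
    have := haddq X Y
    rw [← ha, haq] at this
    linear_combination this + (Y ^ q - a) * htwo
  have hy2 : (Y ^ q) ^ q = (X ^ q) ^ q + a := by
    rw [hy1, haddq, haq]
  rw [hy2, hy1, hy0] at h
  -- extract equality of the 2^j-power parts
  have h2j : (((X + a) * (X ^ q + a) * ((X ^ q) ^ q + a))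
        * ((X + a) + (X ^ q + a) + ((X ^ q) ^ q + a))) ^ 2 ^ j
      = ((X * X ^ q * (X ^ q) ^ q) * (X + X ^ q + (X ^ q) ^ q)) ^ 2 ^ j := by
    linear_combination -h - (a * X + a * (X + X ^ q + (X ^ q) ^ q) + 2 * a ^ 2) * htwo
  have hz : ((((X + a) * (X ^ q + a) * ((X ^ q) ^ q + a))
        * ((X + a) + (X ^ q + a) + ((X ^ q) ^ q + a)))
      + ((X * X ^ q * (X ^ q) ^ q) * (X + X ^ q + (X ^ q) ^ q))) ^ 2 ^ j = 0 := by
    rw [haddj]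
    linear_combination h2j
      + ((X * X ^ q * (X ^ q) ^ q) * (X + X ^ q + (X ^ q) ^ q)) ^ 2 ^ j * htwo
  have hb0 : (((X + a) * (X ^ q + a) * ((X ^ q) ^ q + a))
        * ((X + a) + (X ^ q + a) + ((X ^ q) ^ q + a)))
      + ((X * X ^ q * (X ^ q) ^ q) * (X + X ^ q + (X ^ q) ^ q)) = 0 :=
    pow_eq_zero_iff (pow_ne_zero j two_ne_zero) |>.mp hz
  -- the key factorization
  have key : a * ((a + (X + X ^ q + (X ^ q) ^ q) + X)
      * (a + (X + X ^ q + (X ^ q) ^ q) + X ^ q)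
      * (a + (X + X ^ q + (X ^ q) ^ q) + (X ^ q) ^ q)) = 0 := by
    linear_combination hb0 +
      (-(X * X ^ q * ((X ^ q) ^ q) ^ 2) - X * (X ^ q) ^ 2 * (X ^ q) ^ q
        - X ^ 2 * X ^ q * (X ^ q) ^ q
        + a * (((X ^ q) ^ q) ^ 3 + (X ^ q) ^ 3 + X ^ 3)
        + 3 * a * (X ^ q * ((X ^ q) ^ q) ^ 2 + (X ^ q) ^ 2 * (X ^ q) ^ q
          + X * ((X ^ q) ^ q) ^ 2 + X * (X ^ q) ^ 2 + X ^ 2 * (X ^ q) ^ q + X ^ 2 * X ^ q)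
        + 5 * a * (X * X ^ q * (X ^ q) ^ q)
        + 2 * a ^ 2 * (X ^ 2 + (X ^ q) ^ 2 + ((X ^ q) ^ q) ^ 2)
        + 3 * a ^ 2 * (X ^ q * (X ^ q) ^ q + X * (X ^ q) ^ q + X * X ^ q)
        - a ^ 4) * htwo
  -- goal reduces to a = 0
  suffices haz : a = 0 by linear_combination haz - ha - Y * htwo
  rcases mul_eq_zero.mp key with haz | hf
  · exact haz
  rcases mul_eq_zero.mp hf with hf | e2
  rcases mul_eq_zero.mp hf with e0 | e1
  · -- a + S + X = 0 : X is fixed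
    have eX : X = a + (X + X ^ q + (X ^ q) ^ q) := by
      linear_combination -e0 + X * htwo
    have h1 : X ^ q = X := by
      conv_lhs => rw [eX]
      rw [haddq, haq, hSfixX, ← eX]
    rw [h1, h1] at e0
    linear_combination e0 - 2 * X * htwo
  · -- a + S + X^q = 0 : X^q is fixed
    have eX : X ^ q = a + (X + X ^ q + (X ^ q) ^ q) := by
      linear_combination -e1 + X ^ q * htwo
    have h2 : (X ^ q) ^ q = X ^ q := by
      conv_lhs => rw [eX]
      rw [haddq, haq, hSfixX, ← eX]
    have h1 : X = X ^ q := by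
      have := congrArg (· ^ q) h2
      rw [hq3] at this
      exact this.trans h2
    rw [← h1, ← h1] at e1
    linear_combination e1 - 2 * X * htwo
  · -- a + S + (X^q)^q = 0 : (X^q)^q is fixed
    have eX : (X ^ q) ^ q = a + (X + X ^ q + (X ^ q) ^ q) := by
      linear_combination -e2 + (X ^ q) ^ q * htwo
    have h2 : X = (X ^ q) ^ q := by
      have : ((X ^ q) ^ q) ^ q = (X ^ q) ^ q := by
        conv_lhs => rw [eX]
        rw [haddq, haq, hSfixX, ← eX]
      exact (hq3 X).symm.trans this
    have h1 : X ^ q = X := by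
      have := congrArg (· ^ q) h2.symm
      rw [hq3] at this
      exact this.symm
    rw [h1, h1] at e2
    linear_combination e2 - 2 * X * htwo
end

section
/- Let q = 2^m and γ ∈ F_q. Then f(X) = X + γ·Tr_{F_{q^3}/F_q}(X^{(q+1)/2} + X^{(q²−q+1)/2}) is a permutation of F_{q^3} if and only if γ = 0 or γ = 1. -/
/-- The half-exponents are interpreted via the substitution `X ↦ X²`:
`f(X²) = X² + γ·Tr(X^{q+1} + X^{q²−q+1})`. -/
theorem stmt_14 (m : ℕ) (hm : 0 < m) (q : ℕ) (hq : q = 2 ^ m)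
    (F E : Type*) [Field F] [Fintype F] [Field E] [Fintype E] [Algebra F E]
    (hF : Fintype.card F = q) (hE : Fintype.card E = q ^ 3)
    (Tr : E → E) (hTr : ∀ X, Tr X = X + X ^ q + X ^ q ^ 2)
    (γ : F) :
    Function.Bijective
        (fun X : E => X ^ 2 +
          algebraMap F E γ * Tr (X ^ (q + 1) + X ^ (q ^ 2 - q + 1))) ↔
      γ = 0 ∨ γ = 1 := by
  haveI : Fact (Nat.Prime 2) := ⟨Nat.prime_two⟩
  have hq2 : 2 ≤ q := by
    rw [hq]
    calc 2 = 2 ^ 1 := (pow_one 2).symm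
    _ ≤ 2 ^ m := Nat.pow_le_pow_right (by norm_num) hm
  have hq0 : 0 < q := by omega
  have hqq : q ≤ q ^ 2 := Nat.le_self_pow two_ne_zero q
  -- characteristic 2 of E
  haveI hcharE : CharP E 2 := by
    obtain ⟨p, hpc⟩ := CharP.exists E
    haveI := hpc
    obtain ⟨n, hp, hc⟩ := FiniteField.card E p
    have hdvd : p ∣ 2 ^ (m * 3) := by
      rw [pow_mul, ← hq, ← hE, hc]
      exact dvd_pow_self p n.ne_zero
    have hp2 : p = 2 :=
      (Nat.prime_dvd_prime_iff_eq hp Nat.prime_two).mp (hp.dvd_of_dvd_pow hdvd)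
    rwa [hp2] at hpc
  haveI hcharF : CharP F 2 := by
    obtain ⟨p, hpc⟩ := CharP.exists F
    haveI := hpc
    obtain ⟨n, hp, hc⟩ := FiniteField.card F p
    have hdvd : p ∣ 2 ^ m := by
      rw [← hq, ← hF, hc]
      exact dvd_pow_self p n.ne_zero
    have hp2 : p = 2 :=
      (Nat.prime_dvd_prime_iff_eq hp Nat.prime_two).mp (hp.dvd_of_dvd_pow hdvd)
    rwa [hp2] at hpc
  have htwo : (2 : E) = 0 := by exact_mod_cast CharP.cast_eq_zero E 2
  have htwoF : (2 : F) = 0 := by exact_mod_cast CharP.cast_eq_zero F 2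
  -- basic power facts
  have hadd : ∀ a b : E, (a + b) ^ q = a ^ q + b ^ q := by
    intro a b; rw [hq]; exact add_pow_char_pow a b 2 m
  have hq3 : ∀ a : E, a ^ q ^ 3 = a := by
    intro a; rw [← hE]; exact FiniteField.pow_card a
  have hqsq : ∀ a : E, (a ^ q) ^ q = a ^ q ^ 2 := by
    intro a; rw [← pow_mul]; congr 1; ring
  have hcube : ∀ a : E, (a ^ q ^ 2) ^ q = a := by
    intro a
    rw [← pow_mul, show q ^ 2 * q = q ^ 3 by ring]
    exact hq3 a
  have hTadd : ∀ a b : E, Tr (a + b) = Tr a + Tr b := by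
    intro a b
    have h2 : (a + b) ^ q ^ 2 = a ^ q ^ 2 + b ^ q ^ 2 := by
      rw [← hqsq, hadd, hadd, hqsq, hqsq]
    rw [hTr, hTr, hTr, hadd, h2]; ring
  have hTrfix : ∀ w : E, (Tr w) ^ q = Tr w := by
    intro w
    rw [hTr, hadd, hadd, hqsq, hcube]; ring
  have hfixTr : ∀ z : E, z ^ q = z → Tr z = z := by
    intro z hz
    rw [hTr, ← hqsq, hz, hz]
    linear_combination z * htwo
  have hpowq1 : ∀ z : E, z ^ q = z → z ^ (q + 1) = z ^ 2 := by
    intro z hz; rw [pow_add, pow_one, hz]; ring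
  have hpowe : ∀ z : E, z ^ q = z → z ^ (q ^ 2 - q + 1) = z := by
    intro z hz
    by_cases hz0 : z = 0
    · rw [hz0, zero_pow (by omega)]
    · have hzq : z ^ q ≠ 0 := pow_ne_zero _ hz0
      apply mul_right_cancel₀ hzq
      calc z ^ (q ^ 2 - q + 1) * z ^ q = z ^ (q ^ 2 - q + 1 + q) := (pow_add z _ _).symm
        _ = z ^ (q ^ 2 + 1) := by congr 1; omega
        _ = z ^ q ^ 2 * z := by rw [pow_add, pow_one]
        _ = z * z ^ q := by rw [← hqsq, hz, hz]
  have hfix2 : ∀ z : E, z ^ q = z → Tr (z ^ (q + 1) + z ^ (q ^ 2 - q + 1)) = z ^ 2 + z := by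
    intro z hz
    rw [hpowq1 z hz, hpowe z hz]
    apply hfixTr
    rw [hadd, hz, pow_right_comm, hz]
  have hTr0 : Tr 0 = 0 := by
    rw [hTr, zero_pow hq0.ne', zero_pow (by positivity : q ^ 2 ≠ 0)]; ring
  -- the norm-trace identity
  have key : ∀ v : E, v ^ (q ^ 2 - q + 1) * (v * v ^ q * v ^ q ^ 2) = (v * v ^ q ^ 2) ^ 2 := by
    intro v
    calc v ^ (q ^ 2 - q + 1) * (v * v ^ q * v ^ q ^ 2)
        = v ^ (q ^ 2 - q + 1) * (v ^ 1 * v ^ q * v ^ q ^ 2) := by rw [pow_one]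
      _ = v ^ (q ^ 2 - q + 1 + (1 + q + q ^ 2)) := by rw [pow_add, pow_add, pow_add]; ring
      _ = v ^ ((q ^ 2 + 1) * 2) := by congr 1; omega
      _ = (v ^ (q ^ 2 + 1)) ^ 2 := by rw [pow_mul]
      _ = (v * v ^ q ^ 2) ^ 2 := by rw [pow_add, pow_one]; ring
  have hNT : ∀ z : E, Tr (z ^ (q ^ 2 - q + 1)) * (z * z ^ q * z ^ q ^ 2) =
      (z * z ^ q + z ^ q * z ^ q ^ 2 + z ^ q ^ 2 * z) ^ 2 := by
    intro z
    rw [hTr, pow_right_comm _ _ q, pow_right_comm _ _ (q ^ 2)]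
    have k0 := key z
    have k1 : (z ^ q) ^ (q ^ 2 - q + 1) * (z * z ^ q * z ^ q ^ 2) = (z ^ q * z) ^ 2 := by
      have h := key (z ^ q)
      rw [hqsq, pow_right_comm z q (q ^ 2), hcube] at h
      linear_combination h
    have k2 : (z ^ q ^ 2) ^ (q ^ 2 - q + 1) * (z * z ^ q * z ^ q ^ 2) = (z ^ q ^ 2 * z ^ q) ^ 2 := by
      have h := key (z ^ q ^ 2)
      have h1 : (z ^ q ^ 2) ^ q ^ 2 = z ^ q := by rw [← hqsq, hcube]
      rw [hcube, h1] at h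
      linear_combination h
    linear_combination k0 + k1 + k2 -
      (z * z ^ q * (z ^ q * z ^ q ^ 2) + z * z ^ q * (z ^ q ^ 2 * z) +
        z ^ q * z ^ q ^ 2 * (z ^ q ^ 2 * z)) * htwo
  have hE2 : ∀ z : E, Tr (z ^ (q + 1)) = z * z ^ q + z ^ q * z ^ q ^ 2 + z ^ q ^ 2 * z := by
    intro z
    have h1 : z ^ (q + 1) = z * z ^ q := by rw [pow_add, pow_one]; ring
    have e1 : (z * z ^ q) ^ q = z ^ q * z ^ q ^ 2 := by rw [mul_pow, hqsq]
    have e2 : (z * z ^ q) ^ q ^ 2 = z ^ q ^ 2 * z := by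
      rw [mul_pow, pow_right_comm z q (q ^ 2), hcube]
    rw [hTr, h1, e1, e2]
  constructor
  · -- bijective → γ = 0 ∨ γ = 1
    intro hbij
    by_contra hcon
    push_neg at hcon
    obtain ⟨h0, h1⟩ := hcon
    have h1γ : 1 + γ ≠ 0 := by
      intro h
      exact h1 (by linear_combination h - htwoF)
    set a : F := γ / (1 + γ) with ha
    have ha0 : a ≠ 0 := div_ne_zero h0 h1γ
    have haF : (1 + γ) * a = γ := by rw [ha]; field_simp
    have hX0fix : (algebraMap F E a) ^ q = algebraMap F E a := by
      rw [← map_pow]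
      congr 1
      have := FiniteField.pow_card a
      rwa [hF] at this
    have hval : a ^ 2 + γ * (a ^ 2 + a) = 0 := by
      linear_combination a * haF + a * γ * htwoF
    have hcol : (fun X : E => X ^ 2 +
          algebraMap F E γ * Tr (X ^ (q + 1) + X ^ (q ^ 2 - q + 1))) (algebraMap F E a)
        = (fun X : E => X ^ 2 +
          algebraMap F E γ * Tr (X ^ (q + 1) + X ^ (q ^ 2 - q + 1))) 0 := by
      simp only
      rw [hfix2 _ hX0fix, zero_pow (by omega : q + 1 ≠ 0),
        zero_pow (by omega : q ^ 2 - q + 1 ≠ 0), add_zero, hTr0, mul_zero, add_zero,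
        zero_pow (two_ne_zero), ← map_pow, ← map_add, ← map_mul, ← map_add, hval, map_zero]
    have := hbij.injective hcol
    rw [← map_zero (algebraMap F E)] at this
    exact ha0 ((algebraMap F E).injective this)
  · rintro (rfl | rfl)
    · -- γ = 0 : the map is the squaring map
      simp only [map_zero, zero_mul, add_zero]
      rw [← Finite.injective_iff_bijective]
      intro x y hxy
      simp only at hxy
      have h2 : (x - y) ^ 2 = 0 := by
        linear_combination hxy + (y ^ 2 - x * y) * htwo
      exact sub_eq_zero.mp (pow_eq_zero_iff two_ne_zero |>.mp h2)
    · -- γ = 1 : the hard case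
      simp only [map_one, one_mul]
      rw [← Finite.injective_iff_bijective]
      intro x y hxy
      simp only at hxy
      simp only [hTadd] at hxy
      -- hxy : x^2 + (Tr (x^(q+1)) + Tr (x^(q^2-q+1))) = y^2 + (Tr (y^(q+1)) + Tr (y^(q^2-q+1)))
      obtain ⟨s, hs⟩ : ∃ t : E, t = x + y := ⟨_, rfl⟩
      have hsum : s ^ 2 = Tr (x ^ (q + 1)) + Tr (x ^ (q ^ 2 - q + 1)) +
          Tr (y ^ (q + 1)) + Tr (y ^ (q ^ 2 - q + 1)) := by
        rw [hs]
        linear_combination hxy + (x * y + y ^ 2 - Tr (x ^ (q + 1)) - Tr (x ^ (q ^ 2 - q + 1))) * htwo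
      have hs2fix : (s ^ 2) ^ q = s ^ 2 := by
        rw [hsum, hadd, hadd, hadd, hTrfix, hTrfix, hTrfix, hTrfix]
      have hsfix : s ^ q = s := by
        have hz : (s ^ q + s) ^ 2 = 0 := by
          have h2' : (s ^ q) ^ 2 = s ^ 2 := by rw [pow_right_comm, hs2fix]
          linear_combination h2' + (s ^ q * s + s ^ 2) * htwo
        have hz2 : s ^ q + s = 0 := pow_eq_zero_iff two_ne_zero |>.mp hz
        linear_combination hz2 + (-s) * htwo
      have hxs : x = y + s := by rw [hs]; linear_combination (-y) * htwo
      by_cases hs0 : s = 0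
      · rw [hxs, hs0, add_zero]
      · by_cases hyfix : y ^ q = y
        · -- both fixed, map is identity there
          have hxfix : x ^ q = x := by
            rw [hxs, hadd, hyfix, hsfix, ← hxs]
          rw [← hTadd, ← hTadd, hfix2 x hxfix, hfix2 y hyfix] at hxy
          linear_combination hxy + (y ^ 2 - x ^ 2) * htwo
        · exfalso
          have hxq : x ^ q = y ^ q + s := by rw [hxs, hadd, hsfix]
          have hxq2 : x ^ q ^ 2 = y ^ q ^ 2 + s := by
            rw [← hqsq, hxq, hadd, hsfix, hqsq]
          rw [hE2 x, hE2 y] at hxy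
          have hA := hNT x
          have hB := hNT y
          rw [hxq2, hxq, hxs] at hxy hA
          -- the key factored identity
          have hprod : s * (((y * y ^ q + y ^ q * y ^ q ^ 2 + y ^ q ^ 2 * y) + s * y) *
              ((y * y ^ q + y ^ q * y ^ q ^ 2 + y ^ q ^ 2 * y) + s * (y ^ q)) *
              ((y * y ^ q + y ^ q * y ^ q ^ 2 + y ^ q ^ 2 * y) + s * (y ^ q ^ 2))) = 0 := by
            linear_combination
              (-(y * y ^ q * y ^ q ^ 2) * ((y + s) * (y ^ q + s) * (y ^ q ^ 2 + s))) * hxy +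
              (y * y ^ q * y ^ q ^ 2) * hA - ((y + s) * (y ^ q + s) * (y ^ q ^ 2 + s)) * hB +
              (5*y*(y^q)*(y^q^2)*s^4 + 2*y*(y^q)*(y^q^2)*s^5 + 6*y*(y^q)*(y^q^2)^2*s^3 +
               3*y*(y^q)*(y^q^2)^2*s^4 + 2*y*(y^q)*(y^q^2)^3*s^2 + y*(y^q)*(y^q^2)^3*s^3 +
               6*y*(y^q)^2*(y^q^2)*s^3 + 3*y*(y^q)^2*(y^q^2)*s^4 + 7*y*(y^q)^2*(y^q^2)^2*s^2 +
               4*y*(y^q)^2*(y^q^2)^2*s^3 + 2*y*(y^q)^2*(y^q^2)^3*s + y*(y^q)^2*(y^q^2)^3*s^2 +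
               2*y*(y^q)^3*(y^q^2)*s^2 + y*(y^q)^3*(y^q^2)*s^3 + 2*y*(y^q)^3*(y^q^2)^2*s +
               y*(y^q)^3*(y^q^2)^2*s^2 + 6*y^2*(y^q)*(y^q^2)*s^3 + 4*y^2*(y^q)*(y^q^2)*s^4 +
               7*y^2*(y^q)*(y^q^2)^2*s^2 + 5*y^2*(y^q)*(y^q^2)^2*s^3 + 2*y^2*(y^q)*(y^q^2)^3*s +
               y^2*(y^q)*(y^q^2)^3*s^2 + 7*y^2*(y^q)^2*(y^q^2)*s^2 + 5*y^2*(y^q)^2*(y^q^2)*s^3 +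
               6*y^2*(y^q)^2*(y^q^2)^2*s + 6*y^2*(y^q)^2*(y^q^2)^2*s^2 + y^2*(y^q)^2*(y^q^2)^3*s +
               2*y^2*(y^q)^3*(y^q^2)*s + y^2*(y^q)^3*(y^q^2)*s^2 + y^2*(y^q)^3*(y^q^2)^2*s +
               2*y^3*(y^q)*(y^q^2)*s^2 + 2*y^3*(y^q)*(y^q^2)*s^3 + 2*y^3*(y^q)*(y^q^2)^2*s +
               2*y^3*(y^q)*(y^q^2)^2*s^2 + 2*y^3*(y^q)^2*(y^q^2)*s + 2*y^3*(y^q)^2*(y^q^2)*s^2 +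
               2*y^3*(y^q)^2*(y^q^2)^2*s) * htwo
          have hkey2 : ∀ w : E,
              (y * y ^ q + y ^ q * y ^ q ^ 2 + y ^ q ^ 2 * y) + s * w = 0 → w ^ q = w := by
            intro w hw
            have h1 : s * w = y * y ^ q + y ^ q * y ^ q ^ 2 + y ^ q ^ 2 * y := by
              linear_combination (-1 : E) * hw + s * w * htwo
            have h2 : (s * w) ^ q = s * w := by
              rw [h1, ← hE2 y]; exact hTrfix _
            rw [mul_pow, hsfix] at h2
            exact mul_left_cancel₀ hs0 h2
          have hfac := (mul_eq_zero.mp hprod).resolve_left hs0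
          rcases mul_eq_zero.mp hfac with h | h
          · rcases mul_eq_zero.mp h with h' | h'
            · exact hyfix (hkey2 y h')
            · -- y^q fixed
              have h2 : (y ^ q) ^ q = y ^ q := hkey2 (y ^ q) h'
              have h3 : y ^ q ^ 2 = y ^ q := by rw [← hqsq]; exact h2
              have h4 : y = y ^ q := by
                calc y = (y ^ q ^ 2) ^ q := (hcube y).symm
                  _ = (y ^ q) ^ q := by rw [h3]
                  _ = y ^ q := h2
              exact hyfix h4.symm
          · -- y^(q^2) fixed
            have h2 : (y ^ q ^ 2) ^ q = y ^ q ^ 2 := hkey2 (y ^ q ^ 2) h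
            have h3 : y = y ^ q ^ 2 := (hcube y).symm.trans h2
            have h4 : y ^ q = (y ^ q ^ 2) ^ q := congrArg (· ^ q) h3
            rw [hcube] at h4
            exact hyfix h4
end

section
/- Let q = 2^m and γ ∈ F_q. Then f(X) = X + γ·Tr_{F_{q^3}/F_q}(X^{2q+1} + X^{4q+1}) is a permutation of F_{q^3} if and only if γ = 0, or (γ = 1 and m is odd). -/
/-!
Let `σ x = x ^ q` and `P(c, t) = t⁴ + t² + (c + c³) t + c² + c⁴`. In characteristic two, for
`d ∈ 𝔽_q` (i.e. `σ d = d`) one has `f (y + d) = f y + d (1 + γ P(d, Tr y))`, while `f x = f y`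
forces `x - y ∈ 𝔽_q`, as `x - y` is then a difference of traces. So for `γ ≠ 0`, `f` fails to be
injective exactly when `P(c, t) = γ⁻¹` has a solution with `c ≠ 0`.

Writing `P = Y² + (1 + c)² Y + c⁴` with `Y = t² + c t + c²`, the equation `P = 1` yields a root of
`w² + w + 1`, i.e. puts `1` in the Artin–Schreier image `{s² + s}`; this is impossible in a field of
odd degree over `𝔽₂`, which has no primitive cube root of unity (`𝔽_{q³}` as well as `𝔽_q`).
Every other `a ≠ 0` is a value of `P` with `c ≠ 0`: the Artin–Schreier image has index two in
`(𝔽_q, +)`, and counting produces a `c` for which the remaining quadratic equations are solvable.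
-/

lemma three_dvd_two_pow_sub_one_iff (m : ℕ) : 3 ∣ 2 ^ m - 1 ↔ Even m := by
  obtain ⟨k, rfl | rfl⟩ := Nat.even_or_odd' m
  all_goals
    have h4 : 4 ^ k % 3 = 1 := by simp [Nat.pow_mod]
    have h1 : 1 ≤ 4 ^ k := Nat.one_le_pow _ _ (by norm_num)
    simp only [pow_succ, pow_mul]
    norm_num [Nat.even_add_one]
    omega

section ArtinSchreier

variable (K : Type*) [Field K] [CharP K 2]

def artinSchreier : K →+ K where
  toFun x := x ^ 2 + x
  map_zero' := by simp
  map_add' x y := by simp only [CharTwo.add_sq]; ring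

variable {K}

@[simp]
lemma artinSchreier_apply (x : K) : artinSchreier K x = x ^ 2 + x :=
  rfl

lemma mem_range_artinSchreier {x : K} : x ∈ (artinSchreier K).range ↔ ∃ s, s ^ 2 + s = x :=
  Iff.rfl

lemma sq_mem_range_artinSchreier_iff {x : K} :
    x ^ 2 ∈ (artinSchreier K).range ↔ x ∈ (artinSchreier K).range := by
  have hx : x ^ 2 = x + artinSchreier K x := by
    rw [artinSchreier_apply]
    linear_combination (norm := (ring_nf; reduce_mod_char!))
  rw [hx, AddSubgroup.add_mem_cancel_right _ (AddMonoidHom.mem_range.mpr ⟨x, rfl⟩)]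

lemma pow_four_mem_range_artinSchreier_iff {x : K} :
    x ^ 4 ∈ (artinSchreier K).range ↔ x ∈ (artinSchreier K).range := by
  rw [show x ^ 4 = (x ^ 2) ^ 2 by ring, sq_mem_range_artinSchreier_iff,
    sq_mem_range_artinSchreier_iff]

lemma index_range_artinSchreier [Finite K] : (artinSchreier K).range.index = 2 := by
  have hker : ((artinSchreier K).ker : Set K) = {0, 1} := by
    ext x
    simp only [SetLike.mem_coe, AddMonoidHom.mem_ker, artinSchreier_apply, Set.mem_insert_iff,
      Set.mem_singleton_iff]
    rw [show x ^ 2 + x = x * (x + 1) by ring, mul_eq_zero, CharTwo.add_eq_zero]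
  rw [AddSubgroup.index_range]
  change Nat.card ((artinSchreier K).ker : Set K) = 2
  rw [hker, Nat.card_coe_set_eq, Set.ncard_pair zero_ne_one]

lemma add_mem_range_artinSchreier_of_notMem [Finite K] {x y : K}
    (hx : x ∉ (artinSchreier K).range) (hy : y ∉ (artinSchreier K).range) :
    x + y ∈ (artinSchreier K).range := by
  rw [AddSubgroup.add_mem_iff_of_index_two index_range_artinSchreier]
  tauto

lemma exists_sq_add_eq_and_mul_add_mem [Finite K] {w e : K} (hw : w ∈ (artinSchreier K).range)
    (he : e ∉ (artinSchreier K).range) (b : K) :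
    ∃ z, z ^ 2 + z = w ∧ e * z + b ∈ (artinSchreier K).range := by
  obtain ⟨z, hz⟩ := mem_range_artinSchreier.mp hw
  by_cases hzb : e * z + b ∈ (artinSchreier K).range
  · exact ⟨z, hz, hzb⟩
  · refine ⟨z + 1, by linear_combination (norm := (ring_nf; reduce_mod_char!)) hz, ?_⟩
    rw [show e * (z + 1) + b = e * z + b + e by ring]
    exact add_mem_range_artinSchreier_of_notMem hzb he

lemma one_mem_range_artinSchreier_iff [Fintype K] :
    (1 : K) ∈ (artinSchreier K).range ↔ 3 ∣ Fintype.card K - 1 := by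
  rw [mem_range_artinSchreier]
  constructor
  · rintro ⟨s, hs⟩
    have hs1 : s ≠ 1 := by
      rintro rfl
      rw [one_pow, one_add_one_eq_two, CharTwo.two_eq_zero] at hs
      exact zero_ne_one hs
    have hs3 : s ^ 3 = 1 := by
      linear_combination (norm := (ring_nf; reduce_mod_char!)) (s + 1) * hs
    rw [← orderOf_eq_prime hs3 hs1]
    exact orderOf_dvd_of_pow_eq_one
      (FiniteField.pow_card_sub_one_eq_one s (by rintro rfl; simp at hs3))
  · intro h3
    classical
    rw [← Fintype.card_units] at h3
    have : Fact (Nat.Prime 3) := ⟨Nat.prime_three⟩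
    obtain ⟨u, hu⟩ := exists_prime_orderOf_dvd_card 3 h3
    have hu3 : (u : K) ^ 3 = 1 := by
      rw [← Units.val_pow_eq_pow_val, ← hu, pow_orderOf_eq_one, Units.val_one]
    have hu1 : (u : K) - 1 ≠ 0 := by
      rw [sub_ne_zero, Ne, Units.val_eq_one, ← orderOf_eq_one_iff, hu]
      norm_num
    refine ⟨u, mul_left_cancel₀ hu1 ?_⟩
    linear_combination (norm := (ring_nf; reduce_mod_char!)) hu3

lemma one_mem_range_artinSchreier_iff_even [Fintype K] {m : ℕ} (hK : Fintype.card K = 2 ^ m) :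
    (1 : K) ∈ (artinSchreier K).range ↔ Even m := by
  rw [one_mem_range_artinSchreier_iff, hK, three_dvd_two_pow_sub_one_iff]

end ArtinSchreier

open Finset in
lemma exists_ne_one_mul_notMem_inv_notMem {K : Type*} [Field K] [Fintype K] {H : AddSubgroup K}
    (hH : H.index = 2) {β : K} (hβ0 : β ≠ 0) (hβ1 : β ≠ 1) :
    ∃ u : K, u ≠ 0 ∧ u ≠ 1 ∧ β * u ∉ H ∧ u⁻¹ ∉ H := by
  classical
  have hN : 2 * #({v | v ∉ H} : Finset K) = Fintype.card K := by
    have h := H.card_mul_index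
    rw [hH, Nat.card_eq_fintype_card, Nat.card_eq_fintype_card, Fintype.card_subtype] at h
    have := card_filter_add_card_filter_not (s := univ) (· ∈ H)
    rw [card_univ] at this
    omega
  set N : Finset K := {v | v ∉ H}
  set S : Finset K := {u | β * u ∉ H}
  set T : Finset K := {u | u⁻¹ ∉ H}
  have hS : #S = #N := card_equiv (Equiv.mulLeft₀ β hβ0) (by simp [S, N])
  have hT : #T = #N := card_equiv (Equiv.inv K) (by simp [T, N])
  have hST : S ∪ T ⊆ univ.erase 0 := by
    intro u
    simp only [S, T, mem_union, mem_filter, mem_univ, true_and, mem_erase, and_true]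
    rintro (h | h) rfl <;> simp at h
  obtain ⟨u, hu⟩ : (S ∩ T).Nonempty := by
    have := card_le_card hST
    have := card_union_add_card_inter S T
    rw [card_erase_of_mem (mem_univ _), card_univ] at *
    have : 0 < Fintype.card K := Fintype.card_pos
    rw [← card_pos]
    omega
  simp only [S, T, mem_inter, mem_filter, mem_univ, true_and] at hu
  have hu0 : u ≠ 0 := by rintro rfl; simp at hu
  by_cases hu1 : u = 1
  · -- `u ↦ (β u)⁻¹` swaps the two conditions.
    subst hu1
    refine ⟨β⁻¹, inv_ne_zero hβ0, inv_ne_one.mpr hβ1, ?_, ?_⟩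
    exacts [by simpa [hβ0] using hu.2, by simpa using hu.1]
  · exact ⟨u, hu0, hu1, hu⟩

section CollisionPoly

/-- `(h (t + c) - h t) / c` for `h s = s³ + s⁵`, computed in characteristic two. -/
def collisionPoly {R : Type*} [CommRing R] (c t : R) : R :=
  t ^ 4 + t ^ 2 + (c + c ^ 3) * t + c ^ 2 + c ^ 4

lemma map_collisionPoly {R S : Type*} [CommRing R] [CommRing S] (f : R →+* S) (c t : R) :
    f (collisionPoly c t) = collisionPoly (f c) (f t) := by
  simp [collisionPoly]

variable {K : Type*} [Field K] [CharP K 2]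

lemma collisionPoly_ne_one (h1 : (1 : K) ∉ (artinSchreier K).range) (c t : K) :
    collisionPoly c t ≠ 1 := by
  intro hP
  apply h1
  by_cases hc : c = 1
  · subst hc
    refine mem_range_artinSchreier.mpr ⟨t, ?_⟩
    rw [← CharTwo.sq_inj]
    unfold collisionPoly at hP
    linear_combination (norm := (ring_nf; reduce_mod_char!)) hP
  · have he : 1 + c ≠ 0 := fun h => hc (by
      linear_combination (norm := (ring_nf; reduce_mod_char!)) h)
    refine mem_range_artinSchreier.mpr ⟨(t ^ 2 + c * t + c ^ 2) / (1 + c) ^ 2, ?_⟩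
    field_simp
    unfold collisionPoly at hP
    linear_combination (norm := (ring_nf; reduce_mod_char!)) hP

/-- The substitution `c = u / (1 + u)`, `t = c s` turns `P(c, t) = α⁴` into an Artin–Schreier
equation for `Z = u² (s² + s + 1)`. -/
lemma collisionPoly_div_eq {α u Z s : K} (hu : u ≠ 0) (hu1 : 1 + u ≠ 0)
    (hZ : Z ^ 2 + Z = (α + (1 + α) * u) ^ 4) (hs : s ^ 2 + s = u⁻¹ ^ 2 * Z + 1) :
    collisionPoly (u / (1 + u)) (u / (1 + u) * s) = α ^ 4 := by
  unfold collisionPoly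
  field_simp at hs ⊢
  linear_combination (norm := (ring_nf; reduce_mod_char!))
    (s * (s + 1) * u ^ 2 + Z + u ^ 2 + 1) * hs + hZ

lemma exists_collisionPoly_eq [Fintype K] {a : K} (ha0 : a ≠ 0)
    (ha : a ≠ 1 ∨ (1 : K) ∈ (artinSchreier K).range) :
    ∃ c t, c ≠ 0 ∧ collisionPoly c t = a := by
  have hsqrt : ∀ x : K, ∃ r, r ^ 2 = x := fun x => by
    simpa [frobenius_def] using surjective_frobenius K 2 x
  by_cases haH : a ∈ (artinSchreier K).range
  · obtain ⟨r, rfl⟩ := hsqrt a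
    obtain ⟨t, ht⟩ := mem_range_artinSchreier.mp (sq_mem_range_artinSchreier_iff.mp haH)
    refine ⟨1, t, one_ne_zero, ?_⟩
    unfold collisionPoly
    linear_combination (norm := (ring_nf; reduce_mod_char!)) (r + t ^ 2 + t) * ht
  have ha1 : a ≠ 1 := by
    rintro rfl
    exact haH (ha.resolve_left (not_not.mpr rfl))
  obtain ⟨α, rfl⟩ : ∃ α, α ^ 4 = a := by
    obtain ⟨b, rfl⟩ := hsqrt a
    obtain ⟨α, rfl⟩ := hsqrt b
    exact ⟨α, by ring⟩
  have hα : α ∉ (artinSchreier K).range := pow_four_mem_range_artinSchreier_iff.not.mp haH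
  have hβ0 : 1 + α ≠ 0 := fun h => ha1 (by rw [← CharTwo.add_eq_zero.mp h, one_pow])
  have hβ1 : 1 + α ≠ 1 := fun h => ha0 (by rw [add_eq_left.mp h, zero_pow four_ne_zero])
  obtain ⟨u, hu0, hu1, hβu, hu⟩ :=
    exists_ne_one_mul_notMem_inv_notMem index_range_artinSchreier hβ0 hβ1
  have hw : (α + (1 + α) * u) ^ 4 ∈ (artinSchreier K).range :=
    pow_four_mem_range_artinSchreier_iff.mpr (add_mem_range_artinSchreier_of_notMem hα hβu)
  obtain ⟨Z, hZ, hZu⟩ := exists_sq_add_eq_and_mul_add_mem hw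
    (sq_mem_range_artinSchreier_iff.not.mpr hu) 1
  obtain ⟨s, hs⟩ := mem_range_artinSchreier.mp hZu
  have hu1' : 1 + u ≠ 0 := fun h => hu1 (CharTwo.add_eq_zero.mp h).symm
  exact ⟨u / (1 + u), u / (1 + u) * s, div_ne_zero hu0 hu1',
    collisionPoly_div_eq hu0 hu1' hZ hs⟩

end CollisionPoly

section CubicTrace

variable {R : Type*} [CommRing R] (σ : R →+* R)

def cubicTrace (x : R) : R := x + σ x + σ (σ x)

/-- With `σ X = X ^ q`, this is `X + γ Tr(X ^ (2q + 1) + X ^ (4q + 1))`. -/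
def traceMap (γ X : R) : R := X + γ * cubicTrace σ (σ X ^ 2 * X + σ X ^ 4 * X)

lemma traceMap_zero : traceMap σ 0 = id :=
  funext fun X => by simp [traceMap]

variable {σ}

lemma cubicTrace_add (x y : R) : cubicTrace σ (x + y) = cubicTrace σ x + cubicTrace σ y := by
  simp only [cubicTrace, map_add]
  ring

lemma map_cubicTrace (hσ : ∀ x, σ (σ (σ x)) = x) (x : R) :
    σ (cubicTrace σ x) = cubicTrace σ x := by
  simp only [cubicTrace, map_add, hσ]
  ring

lemma cubicTrace_of_fixed [CharP R 2] {x : R} (hx : σ x = x) : cubicTrace σ x = x := by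
  rw [cubicTrace, hx, hx, CharTwo.add_self_eq_zero, zero_add]

/-- Since `σ d = d`, the trace is `d`-linear, and in characteristic two
`cubicTrace σ (σ y ^ 2 ^ k) = cubicTrace σ y ^ 2 ^ k`. -/
lemma traceMap_add_of_fixed [CharP R 2] (hσ : ∀ x, σ (σ (σ x)) = x) {d : R} (hd : σ d = d)
    (γ y : R) :
    traceMap σ γ (y + d) =
      traceMap σ γ y + d * (1 + γ * collisionPoly d (cubicTrace σ y)) := by
  simp only [traceMap, cubicTrace, collisionPoly, map_add, map_mul, map_pow, hd, hσ]
  linear_combination (norm := (ring_nf; reduce_mod_char!))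

lemma not_injective_traceMap [CharP R 2] (hσ : ∀ x, σ (σ (σ x)) = x) {γ c t : R}
    (hc : σ c = c) (ht : σ t = t) (hc0 : c ≠ 0) (hP : γ * collisionPoly c t = 1) :
    ¬ Function.Injective (traceMap σ γ) := by
  intro hinj
  have h := traceMap_add_of_fixed hσ hc γ t
  rw [cubicTrace_of_fixed ht, hP, CharTwo.add_self_eq_zero, mul_zero, add_zero] at h
  exact hc0 (add_eq_left.mp (hinj h))

lemma injective_traceMap_one {K : Type*} [Field K] [CharP K 2] {σ : K →+* K}
    (hσ : ∀ x, σ (σ (σ x)) = x) (h1 : (1 : K) ∉ (artinSchreier K).range) :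
    Function.Injective (traceMap σ 1) := by
  intro x y hxy
  have hd : σ (x + y) = x + y := by
    have : x + y = cubicTrace σ (σ x ^ 2 * x + σ x ^ 4 * x + (σ y ^ 2 * y + σ y ^ 4 * y)) := by
      simp only [traceMap, one_mul] at hxy
      rw [cubicTrace_add]
      linear_combination (norm := (ring_nf; reduce_mod_char!)) hxy
    rw [this, map_cubicTrace hσ]
  have h := traceMap_add_of_fixed hσ hd 1 y
  rw [add_comm x y, CharTwo.add_cancel_left, hxy, left_eq_add, one_mul, mul_eq_zero] at h
  rcases h with h | h
  · exact (CharTwo.add_eq_zero.mp h).symm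
  · exact absurd (CharTwo.add_eq_zero.mp h).symm (collisionPoly_ne_one h1 _ _)

end CubicTrace

section Frobenius

variable {R : Type*} [CommRing R] {p : ℕ} [ExpChar R p] (m : ℕ)

lemma cubicTrace_iterateFrobenius (x : R) :
    cubicTrace (iterateFrobenius R p m) x = x + x ^ p ^ m + x ^ (p ^ m) ^ 2 := by
  rw [sq, pow_mul]
  rfl

lemma traceMap_iterateFrobenius (γ X : R) :
    traceMap (iterateFrobenius R p m) γ X =
      X + γ * cubicTrace (iterateFrobenius R p m)
        (X ^ (2 * p ^ m + 1) + X ^ (4 * p ^ m + 1)) := by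
  simp only [traceMap, iterateFrobenius_def, pow_succ, pow_mul, mul_comm _ (p ^ m)]

variable {m}

lemma iterateFrobenius_apply_apply_apply {K : Type*} [Field K] [Fintype K] [ExpChar K p]
    (hK : Fintype.card K = (p ^ m) ^ 3) (x : K) :
    iterateFrobenius K p m (iterateFrobenius K p m (iterateFrobenius K p m x)) = x := by
  simp only [iterateFrobenius_def, ← pow_mul]
  rw [← pow_three', ← hK, FiniteField.pow_card]

lemma iterateFrobenius_algebraMap {F : Type*} [Field F] [Fintype F] [Algebra F R]
    (hF : Fintype.card F = p ^ m) (v : F) :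
    iterateFrobenius R p m (algebraMap F R v) = algebraMap F R v := by
  rw [iterateFrobenius_def, ← map_pow, ← hF, FiniteField.pow_card]

end Frobenius

theorem stmt_15_general (m : ℕ) (q : ℕ) (hq : q = 2 ^ m)
    (F E : Type*) [Field F] [Fintype F] [Field E] [Fintype E] [Algebra F E]
    (hF : Fintype.card F = q) (hE : Fintype.card E = q ^ 3)
    (Tr : E → E) (hTr : ∀ X, Tr X = X + X ^ q + X ^ q ^ 2)
    (γ : F) :
    Function.Bijective
        (fun X : E => X +
          algebraMap F E γ * Tr (X ^ (2 * q + 1) + X ^ (4 * q + 1))) ↔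
      γ = 0 ∨ (γ = 1 ∧ Odd m) := by
  subst hq
  have hE' : Fintype.card E = 2 ^ (3 * m) := by rw [hE, ← pow_mul, mul_comm]
  have := charP_of_card_eq_prime_pow hF
  have := charP_of_card_eq_prime_pow hE'
  have hσ := iterateFrobenius_apply_apply_apply hE
  have hfix := iterateFrobenius_algebraMap (R := E) hF
  have hf : (fun X : E => X +
        algebraMap F E γ * Tr (X ^ (2 * 2 ^ m + 1) + X ^ (4 * 2 ^ m + 1))) =
      traceMap (iterateFrobenius E 2 m) (algebraMap F E γ) :=
    funext fun X => by rw [traceMap_iterateFrobenius, hTr, cubicTrace_iterateFrobenius]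
  rw [hf, ← Finite.injective_iff_bijective]
  constructor
  · intro hinj
    by_contra! hγ
    obtain ⟨c, t, hc0, hP⟩ := exists_collisionPoly_eq (inv_ne_zero hγ.1) <| by
      rw [one_mem_range_artinSchreier_iff_even hF, Ne, inv_eq_one, ← Nat.not_odd_iff_even]
      tauto
    refine not_injective_traceMap hσ (hfix c) (hfix t) ((map_ne_zero _).mpr hc0) ?_ hinj
    rw [← map_collisionPoly, hP, ← map_mul, mul_inv_cancel₀ hγ.1, map_one]
  · rintro (rfl | ⟨rfl, hm⟩)
    · rw [map_zero, traceMap_zero]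
      exact Function.injective_id
    · rw [map_one]
      refine injective_traceMap_one hσ ?_
      rw [one_mem_range_artinSchreier_iff_even hE', Nat.not_even_iff_odd]
      exact Nat.odd_mul.mpr ⟨by decide, hm⟩

theorem stmt_15 (m : ℕ) (hm : 0 < m) (q : ℕ) (hq : q = 2 ^ m)
    (F E : Type*) [Field F] [Fintype F] [Field E] [Fintype E] [Algebra F E]
    (hF : Fintype.card F = q) (hE : Fintype.card E = q ^ 3)
    (Tr : E → E) (hTr : ∀ X, Tr X = X + X ^ q + X ^ q ^ 2)
    (γ : F) :
    Function.Bijective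
        (fun X : E => X +
          algebraMap F E γ * Tr (X ^ (2 * q + 1) + X ^ (4 * q + 1))) ↔
      γ = 0 ∨ (γ = 1 ∧ Odd m) :=
  stmt_15_general m q hq F E hF hE Tr hTr γ
end

section
/- Let q = 2^m and γ ∈ F_q. Then f(X) = X + γ·Tr_{F_{q^3}/F_q}(X^{2q+2} + X^{4q+1}) is a permutation of F_{q^3} if and only if γ = 0, or (γ = 1 and m is not divisible by 4). -/
/-!
Let `T(X) = Tr(X^{2q+2} + X^{4q+1})`, an element of `F_q`. In characteristic two, for `a ∈ F_q`,
`T(X + a) = T(X) + a^4 + a t^4 + a^4 t + a^5` with `t = Tr X`. Two inputs with the same image differ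
by an element `a` of `F_q`, so, the trace being onto `F_q`, `f` permutes `F_{q^3}` iff
`a + γ (a^4 + a t^4 + a^4 t + a^5) = 0` forces `a = 0` for all `t, a ∈ F_q`. For `γ = 1` and `a ≠ 0`
this equation says that `(t + 1) / a` is a root of `v^4 + v + 1`, which has a root in `F_{2^m}` iff
`4 ∣ m` (its roots have multiplicative order 15). For `γ ∉ {0, 1}`, `t = 1` and `a` with
`γ a^4 = 1 + γ` solve it.
-/

open Polynomial Function

lemma charP_two_of_card_eq_two_pow {K : Type*} [Field K] [Fintype K] {k : ℕ}
    (h : Fintype.card K = 2 ^ k) : CharP K 2 := by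
  have hk : k ≠ 0 := by
    rintro rfl
    simpa [h] using Fintype.one_lt_card (α := K)
  exact ringChar.of_eq <| FiniteField.even_card_iff_char_two.mpr <| by
    rw [h, Nat.pow_mod, Nat.mod_self, zero_pow hk, Nat.zero_mod]

lemma four_dvd_of_fifteen_dvd_two_pow_sub_one {k : ℕ} (h : 15 ∣ 2 ^ k - 1) : 4 ∣ k := by
  have h2 : orderOf (2 : ZMod 15) = 2 ^ 2 :=
    orderOf_eq_prime_pow (p := 2) (n := 1) (by decide) (by decide)
  rw [show 4 = 2 ^ 2 by rfl, ← h2, orderOf_dvd_iff_pow_eq_one, ← sub_eq_zero]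
  have := (ZMod.natCast_eq_zero_iff (2 ^ k - 1) 15).mpr h
  rwa [Nat.cast_sub Nat.one_le_two_pow, Nat.cast_pow, Nat.cast_one, Nat.cast_ofNat] at this

section CharTwo

variable {R : Type*} [CommRing R] [CharP R 2]

lemma CharTwo.add_pow_four (x y : R) : (x + y) ^ 4 = x ^ 4 + y ^ 4 :=
  add_pow_char_pow x y 2 2

lemma pow_sixteen_eq_self_of_root {v : R} (hv : v ^ 4 + v + 1 = 0) : v ^ 16 = v := by
  have h2 : (2 : R) = 0 := CharTwo.two_eq_zero
  have h4 : v ^ 4 = v + 1 := by linear_combination hv - (v + 1) * h2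
  calc v ^ 16 = (v + 1) ^ 4 := by rw [← h4]; ring
    _ = v := by rw [CharTwo.add_pow_four, h4]; linear_combination h2

lemma X_pow_four_add_X_add_one_dvd : (X ^ 4 + X + 1 : R[X]) ∣ X ^ 2 ^ 4 - X := by
  have h2 : (2 : R[X]) = 0 := CharTwo.two_eq_zero
  exact ⟨X ^ 12 + X ^ 9 + X ^ 8 + X ^ 6 + X ^ 4 + X ^ 3 + X ^ 2 + X, by
    linear_combination (-(X ^ 13 + X ^ 12 + X ^ 10 + X ^ 9 + X ^ 8 + X ^ 7 + X ^ 6 + X ^ 5 + X ^ 4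
      + X ^ 3 + X ^ 2 + X) : R[X]) * h2⟩

end CharTwo

lemma orderOf_eq_fifteen_of_root {K : Type*} [Field K] [CharP K 2] {v : K}
    (hv : v ^ 4 + v + 1 = 0) : orderOf v = 15 := by
  have h2 : (2 : K) = 0 := CharTwo.two_eq_zero
  have hv0 : v ≠ 0 := by rintro rfl; norm_num at hv
  have h15 : v ^ 15 = 1 :=
    mul_right_cancel₀ hv0 (by rw [← pow_succ, one_mul, pow_sixteen_eq_self_of_root hv])
  have h3 : v ^ 3 ≠ 1 := fun h ↦ one_ne_zero (by linear_combination hv - v * h - v * h2)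
  have h5 : v ^ 5 ≠ 1 := fun h ↦ h3 (by linear_combination (v - 1) * v * hv - (v - 1) * h)
  refine orderOf_eq_of_pow_and_pow_div_prime (by norm_num) h15 fun p hp hdvd ↦ ?_
  rcases hp.dvd_mul.mp (show p ∣ 3 * 5 from hdvd) with h | h
  · rw [(Nat.prime_dvd_prime_iff_eq hp Nat.prime_three).mp h]; exact h5
  · rw [(Nat.prime_dvd_prime_iff_eq hp Nat.prime_five).mp h]; exact h3

lemma FiniteField.exists_root_of_dvd_X_pow_card_sub_X {K : Type*} [Field K] [Fintype K]
    {f : K[X]} (hf : f.degree ≠ 0) (hdvd : f ∣ X ^ Fintype.card K - X) : ∃ a, f.eval a = 0 := by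
  have hsplit : Splits (X ^ Fintype.card K - X : K[X]) := by
    rw [splits_iff_card_roots, FiniteField.roots_X_pow_card_sub_X,
      FiniteField.X_pow_card_sub_X_natDegree_eq K Fintype.one_lt_card]
    rfl
  exact (hsplit.of_dvd (FiniteField.X_pow_card_sub_X_ne_zero K Fintype.one_lt_card) hdvd)
    |>.exists_eval_eq_zero hf

theorem exists_root_X_pow_four_add_X_add_one_iff {K : Type*} [Field K] [Fintype K] {k : ℕ}
    (hK : Fintype.card K = 2 ^ k) : (∃ v : K, v ^ 4 + v + 1 = 0) ↔ 4 ∣ k := by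
  have := charP_two_of_card_eq_two_pow hK
  constructor
  · rintro ⟨v, hv⟩
    apply four_dvd_of_fifteen_dvd_two_pow_sub_one
    rw [← orderOf_eq_fifteen_of_root hv, ← hK]
    exact orderOf_dvd_of_pow_eq_one <| FiniteField.pow_card_sub_one_eq_one v <| by
      rintro rfl; norm_num at hv
  · intro h4
    have hdvd : (X ^ 4 + X + 1 : K[X]) ∣ X ^ Fintype.card K - X :=
      X_pow_four_add_X_add_one_dvd.trans (hK ▸ dvd_pow_pow_sub_self_of_dvd h4)
    have hdeg : (X ^ 4 + X + 1 : K[X]).degree = 4 := by compute_degree!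
    obtain ⟨v, hv⟩ := FiniteField.exists_root_of_dvd_X_pow_card_sub_X (by rw [hdeg]; decide) hdvd
    exact ⟨v, by simpa using hv⟩

def shiftIncrement {R : Type*} [CommRing R] (b t : R) : R := b ^ 4 + b * t ^ 4 + b ^ 4 * t + b ^ 5

lemma map_shiftIncrement {R S : Type*} [CommRing R] [CommRing S] (f : R →+* S) (b t : R) :
    f (shiftIncrement b t) = shiftIncrement (f b) (f t) := by
  simp [shiftIncrement]

section CharTwoField

variable {K : Type*} [Field K] [CharP K 2]

lemma add_shiftIncrement_mul_add_one (b v : K) :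
    b + shiftIncrement b (b * v + 1) = b ^ 5 * (v ^ 4 + v + 1) := by
  have h2 : (2 : K) = 0 := CharTwo.two_eq_zero
  rw [shiftIncrement, CharTwo.add_pow_four]
  linear_combination (b + b ^ 4) * h2

lemma forall_add_shiftIncrement_eq_zero_iff :
    (∀ t b : K, b + shiftIncrement b t = 0 → b = 0) ↔ ∀ v : K, v ^ 4 + v + 1 ≠ 0 := by
  have h2 : (2 : K) = 0 := CharTwo.two_eq_zero
  constructor
  · intro h v hv
    refine one_ne_zero (h (1 * v + 1) 1 ?_)
    rw [add_shiftIncrement_mul_add_one, hv, mul_zero]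
  · intro h t b hb
    by_contra hb0
    have ht : t = b * ((t + 1) / b) + 1 := by
      rw [mul_div_cancel₀ _ hb0]; linear_combination -h2
    rw [ht, add_shiftIncrement_mul_add_one] at hb
    exact h _ ((mul_eq_zero.mp hb).resolve_left (pow_ne_zero 5 hb0))

lemma exists_add_mul_shiftIncrement_eq_zero [Finite K] {γ : K} (hγ0 : γ ≠ 0) (hγ1 : γ ≠ 1) :
    ∃ t b : K, b + γ * shiftIncrement b t = 0 ∧ b ≠ 0 := by
  have h2 : (2 : K) = 0 := CharTwo.two_eq_zero
  obtain ⟨b, hb⟩ := (bijective_iterateFrobenius K 2 2).surjective ((1 + γ) / γ)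
  rw [iterateFrobenius_def, eq_div_iff hγ0] at hb
  refine ⟨1, b, ?_, ?_⟩
  · rw [shiftIncrement]
    linear_combination b * hb + (b + γ * b ^ 4 + γ * b) * h2
  · rintro rfl
    exact hγ1 (by linear_combination -hb - h2)

end CharTwoField

theorem forall_add_mul_shiftIncrement_eq_zero_iff {K : Type*} [Field K] [Fintype K] {m : ℕ}
    (hK : Fintype.card K = 2 ^ m) (γ : K) :
    (∀ t b : K, b + γ * shiftIncrement b t = 0 → b = 0) ↔ γ = 0 ∨ (γ = 1 ∧ ¬ 4 ∣ m) := by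
  have := charP_two_of_card_eq_two_pow hK
  rcases eq_or_ne γ 0 with rfl | hγ0
  · simp
  rcases eq_or_ne γ 1 with rfl | hγ1
  · simp only [one_mul, forall_add_shiftIncrement_eq_zero_iff,
      ← exists_root_X_pow_four_add_X_add_one_iff hK]
    simp
  · obtain ⟨t, b, hb, hb0⟩ := exists_add_mul_shiftIncrement_eq_zero hγ0 hγ1
    simp only [hγ0, hγ1, false_or, false_and, iff_false, not_forall]
    exact ⟨t, b, hb, hb0⟩

theorem injective_add_algebraMap_mul_iff {K R : Type*} [Field K] [CommRing R] [Nontrivial R]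
    [Algebra K R] {T τ : R → K} (hτ : Surjective τ) {D : K → K → K}
    (hT : ∀ x b, T (x + algebraMap K R b) = T x + D b (τ x)) (γ : K) :
    Injective (fun x ↦ x + algebraMap K R (γ * T x)) ↔ ∀ t b, b + γ * D b t = 0 → b = 0 := by
  have hshift : ∀ x b, x + algebraMap K R b + algebraMap K R (γ * T (x + algebraMap K R b)) =
      x + algebraMap K R (γ * T x) + algebraMap K R (b + γ * D b (τ x)) := by
    intro x b
    rw [hT]
    simp only [map_add, map_mul]
    ring
  constructor
  · intro hinj t b hb
    obtain ⟨x, rfl⟩ := hτ t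
    have := @hinj (x + algebraMap K R b) x (by simp only; rw [hshift, hb, map_zero, add_zero])
    simpa using this
  · intro h x y hxy
    obtain ⟨b, rfl⟩ : ∃ b, y = x + algebraMap K R b :=
      ⟨γ * (T x - T y), by simp only at hxy; rw [mul_sub, map_sub]; linear_combination -hxy⟩
    simp only [hshift, left_eq_add, map_eq_zero_iff _ (algebraMap K R).injective] at hxy
    rw [h _ _ hxy, map_zero, add_zero]

def frobTrace {R : Type*} [CommRing R] (q : ℕ) (x : R) : R := x + x ^ q + x ^ q ^ 2

theorem frobTrace_card_eq_algebraMap_trace {F E : Type*} [Field F] [Fintype F] [Field E]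
    [Fintype E] [Algebra F E] (hE : Fintype.card E = Fintype.card F ^ 3) (x : E) :
    frobTrace (Fintype.card F) x = algebraMap F E (Algebra.trace F E x) := by
  have hpow : Fintype.card F ^ Module.finrank F E = Fintype.card F ^ 3 := by
    rw [← Module.card_eq_pow_finrank, hE]
  have h3 : Module.finrank F E = 3 := Nat.pow_right_injective Fintype.one_lt_card hpow
  rw [FiniteField.algebraMap_trace_eq_sum_pow, h3, Nat.card_eq_fintype_card]
  simp [Finset.sum_range_succ, frobTrace]

section Frobenius

variable {R : Type*} [CommRing R] {q : ℕ}

lemma frobTrace_eq_of_pow_eq (hfrob : ∀ u v : R, (u + v) ^ q = u ^ q + v ^ q) {x y z : R}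
    (hy : x ^ q = y) (hz : y ^ q = z) (hx : z ^ q = x) :
    frobTrace q (x ^ (2 * q + 2) + x ^ (4 * q + 1)) =
      y ^ 2 * x ^ 2 + y ^ 4 * x + z ^ 2 * y ^ 2 + z ^ 4 * y + x ^ 2 * z ^ 2 + x ^ 4 * z := by
  have hstep : ∀ {x y z : R}, x ^ q = y → y ^ q = z →
      (y ^ 2 * x ^ 2 + y ^ 4 * x) ^ q = z ^ 2 * y ^ 2 + z ^ 4 * y := by
    intro x y z hy hz
    rw [hfrob, show (y ^ 2 * x ^ 2) ^ q = (y ^ q) ^ 2 * (x ^ q) ^ 2 by ring,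
      show (y ^ 4 * x) ^ q = (y ^ q) ^ 4 * x ^ q by ring, hy, hz]
  have hxy : x ^ (2 * q + 2) + x ^ (4 * q + 1) = y ^ 2 * x ^ 2 + y ^ 4 * x := by
    rw [← hy]; ring
  rw [frobTrace, sq q, pow_mul, hxy, hstep hy hz, hstep hz hx]
  ring

lemma frobTrace_add_of_pow_eq_self [CharP R 2] (hfrob : ∀ u v : R, (u + v) ^ q = u ^ q + v ^ q)
    {x a : R} (hx : x ^ q ^ 3 = x) (ha : a ^ q = a) :
    frobTrace q ((x + a) ^ (2 * q + 2) + (x + a) ^ (4 * q + 1)) =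
      frobTrace q (x ^ (2 * q + 2) + x ^ (4 * q + 1)) + shiftIncrement a (frobTrace q x) := by
  have h2 : (2 : R) = 0 := CharTwo.two_eq_zero
  have hy : (x ^ q) ^ q = x ^ q ^ 2 := by rw [← pow_mul, sq]
  have hz : (x ^ q ^ 2) ^ q = x := by rw [← pow_mul, ← pow_succ, hx]
  rw [frobTrace_eq_of_pow_eq hfrob rfl hy hz, frobTrace_eq_of_pow_eq hfrob (by rw [hfrob, ha])
    (by rw [hfrob, ha, hy]) (by rw [hfrob, ha, hz]), shiftIncrement, frobTrace]
  set y := x ^ q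
  set z := x ^ q ^ 2
  simp only [CharTwo.add_sq, CharTwo.add_pow_four]
  linear_combination (a ^ 4 + a ^ 2 * (x ^ 2 + y ^ 2 + z ^ 2) + a ^ 5) * h2

end Frobenius

theorem stmt_16_general (m : ℕ) (q : ℕ) (hq : q = 2 ^ m)
    (F E : Type*) [Field F] [Fintype F] [Field E] [Fintype E] [Algebra F E]
    (hF : Fintype.card F = q) (hE : Fintype.card E = q ^ 3)
    (Tr : E → E) (hTr : ∀ X, Tr X = X + X ^ q + X ^ q ^ 2)
    (γ : F) :
    Function.Bijective
        (fun X : E => X +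
          algebraMap F E γ * Tr (X ^ (2 * q + 2) + X ^ (4 * q + 1))) ↔
      γ = 0 ∨ (γ = 1 ∧ ¬ (4 ∣ m)) := by
  obtain rfl : Tr = frobTrace q := funext hTr
  have : CharP E 2 := charP_two_of_card_eq_two_pow (k := m * 3) (by rw [hE, hq, pow_mul])
  have hfrob : ∀ u v : E, (u + v) ^ q = u ^ q + v ^ q := fun u v ↦ hq ▸ add_pow_char_pow u v 2 m
  have hTrace : ∀ x, frobTrace q x = algebraMap F E (Algebra.trace F E x) := by
    subst hF
    exact frobTrace_card_eq_algebraMap_trace hE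
  have hT : ∀ x b, Algebra.trace F E ((x + algebraMap F E b) ^ (2 * q + 2) +
      (x + algebraMap F E b) ^ (4 * q + 1)) =
      Algebra.trace F E (x ^ (2 * q + 2) + x ^ (4 * q + 1)) +
        shiftIncrement b (Algebra.trace F E x) := by
    intro x b
    apply (algebraMap F E).injective
    rw [map_add (algebraMap F E), map_shiftIncrement, ← hTrace, ← hTrace, ← hTrace,
      frobTrace_add_of_pow_eq_self hfrob (hE ▸ FiniteField.pow_card x)
        (by rw [← map_pow, ← hF, FiniteField.pow_card])]
  simp only [hTrace, ← map_mul]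
  rw [← Finite.injective_iff_bijective,
    injective_add_algebraMap_mul_iff (Algebra.trace_surjective F E) hT,
    forall_add_mul_shiftIncrement_eq_zero_iff (hF.trans hq)]

theorem stmt_16 (m : ℕ) (hm : 0 < m) (q : ℕ) (hq : q = 2 ^ m)
    (F E : Type*) [Field F] [Fintype F] [Field E] [Fintype E] [Algebra F E]
    (hF : Fintype.card F = q) (hE : Fintype.card E = q ^ 3)
    (Tr : E → E) (hTr : ∀ X, Tr X = X + X ^ q + X ^ q ^ 2)
    (γ : F) :
    Function.Bijective
        (fun X : E => X +
          algebraMap F E γ * Tr (X ^ (2 * q + 2) + X ^ (4 * q + 1))) ↔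
      γ = 0 ∨ (γ = 1 ∧ ¬ (4 ∣ m)) :=
  stmt_16_general m q hq F E hF hE Tr hTr γ
end

section
/- Let q = 2^m and γ ∈ F_q. Then the map f(X) = X + γ·Tr_{F_{q^3}/F_q}(X^{(q+1)/2} + X^{(q²+q+2)/2} + X^{(q+3)/2} + X^{(3q+1)/2}) is a permutation of F_{q^3} if and only if γ = 0. -/
/-- The half-exponents are interpreted via the substitution `X ↦ X²`:
`f(X²) = X² + γ·Tr(X^{q+1} + X^{q²+q+2} + X^{q+3} + X^{3q+1})`. -/
theorem stmt_17 (m : ℕ) (hm : 0 < m) (q : ℕ) (hq : q = 2 ^ m)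
    (F E : Type*) [Field F] [Fintype F] [Field E] [Fintype E] [Algebra F E]
    (hF : Fintype.card F = q) (hE : Fintype.card E = q ^ 3)
    (Tr : E → E) (hTr : ∀ X, Tr X = X + X ^ q + X ^ q ^ 2)
    (γ : F) :
    Function.Bijective
        (fun X : E => X ^ 2 +
          algebraMap F E γ *
            Tr (X ^ (q + 1) + X ^ (q ^ 2 + q + 2) + X ^ (q + 3) + X ^ (3 * q + 1))) ↔
      γ = 0 := by
  classical
  have hq2 : 2 ≤ q := by
    subst hq
    calc 2 = 2 ^ 1 := (pow_one 2).symm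
    _ ≤ 2 ^ m := Nat.pow_le_pow_right (by norm_num) hm
  have h2E : (2 : E) = 0 := by
    have h1 : ((Fintype.card E : ℕ) : E) = 0 := FiniteField.cast_card_eq_zero E
    rw [hE, hq] at h1
    push_cast at h1
    exact pow_eq_zero_iff hm.ne' |>.mp (pow_eq_zero_iff three_ne_zero |>.mp h1)
  haveI hchar : CharP E 2 := by
    have hdvd : ringChar E ∣ 2 := ringChar.dvd (by exact_mod_cast h2E)
    rcases (Nat.dvd_prime Nat.prime_two).mp hdvd with h | h
    · exact absurd h CharP.ringChar_ne_one
    · exact h ▸ ringChar.charP E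
  have hfrob : ∀ a b : E, (a + b) ^ q = a ^ q + b ^ q := by
    intro a b; rw [hq]; exact add_pow_char_pow a b 2 m
  have hsub : ∀ a b : E, (a - b) ^ q = a ^ q - b ^ q := by
    intro a b
    rw [CharTwo.sub_eq_add, CharTwo.sub_eq_add, hfrob]
  have hq3 : ∀ a : E, ((a ^ q) ^ q) ^ q = a := by
    intro a
    have h := FiniteField.pow_card a
    rw [hE] at h
    rw [← pow_mul a q q, ← pow_mul a (q * q) q, show q * q * q = q ^ 3 by ring]
    exact h
  have hsqinj : Function.Injective (fun x : E => x ^ 2) := by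
    intro x y hxy
    simp only at hxy
    have h0 : (x - y) ^ 2 = 0 := by linear_combination hxy + (y ^ 2 - x * y) * h2E
    exact sub_eq_zero.mp (pow_eq_zero_iff (two_ne_zero) |>.mp h0)
  have hsqbij : Function.Bijective (fun x : E => x ^ 2) :=
    (Finite.injective_iff_bijective).mp hsqinj
  -- key expansion of the trace expression
  have key : ∀ Y u v : E, Y ^ q = u → u ^ q = v → v ^ q = Y →
      Tr (Y ^ (q + 1) + Y ^ (q ^ 2 + q + 2) + Y ^ (q + 3) + Y ^ (3 * q + 1)) =
        (u * Y + v * u * Y ^ 2 + u * Y ^ 3 + u ^ 3 * Y)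
          + (v * u + Y * v * u ^ 2 + v * u ^ 3 + v ^ 3 * u)
          + (Y * v + u * Y * v ^ 2 + Y * v ^ 3 + Y ^ 3 * v) := by
    intro Y u v h1 h2 h3
    rw [hTr]
    have hW : Y ^ (q + 1) + Y ^ (q ^ 2 + q + 2) + Y ^ (q + 3) + Y ^ (3 * q + 1)
        = u * Y + v * u * Y ^ 2 + u * Y ^ 3 + u ^ 3 * Y := by
      rw [← h2, ← h1]; ring
    rw [hW]
    have hWq : (u * Y + v * u * Y ^ 2 + u * Y ^ 3 + u ^ 3 * Y) ^ q
        = v * u + Y * v * u ^ 2 + v * u ^ 3 + v ^ 3 * u := by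
      calc (u * Y + v * u * Y ^ 2 + u * Y ^ 3 + u ^ 3 * Y) ^ q
          = u ^ q * Y ^ q + v ^ q * u ^ q * (Y ^ q) ^ 2 + u ^ q * (Y ^ q) ^ 3
            + (u ^ q) ^ 3 * Y ^ q := by
            rw [hfrob, hfrob, hfrob]; ring
        _ = v * u + Y * v * u ^ 2 + v * u ^ 3 + v ^ 3 * u := by rw [h1, h2, h3]
    have hWq2 : (v * u + Y * v * u ^ 2 + v * u ^ 3 + v ^ 3 * u) ^ q
        = Y * v + u * Y * v ^ 2 + Y * v ^ 3 + Y ^ 3 * v := by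
      calc (v * u + Y * v * u ^ 2 + v * u ^ 3 + v ^ 3 * u) ^ q
          = v ^ q * u ^ q + Y ^ q * v ^ q * (u ^ q) ^ 2 + v ^ q * (u ^ q) ^ 3
            + (v ^ q) ^ 3 * u ^ q := by
            rw [hfrob, hfrob, hfrob]; ring
        _ = Y * v + u * Y * v ^ 2 + Y * v ^ 3 + Y ^ 3 * v := by rw [h1, h2, h3]
    rw [pow_two q, pow_mul, hWq, hWq2]
  constructor
  · -- bijective → γ = 0
    intro hbij
    by_contra hγ
    obtain ⟨g, hgdef⟩ : ∃ g : E, g = algebraMap F E γ := ⟨_, rfl⟩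
    simp only [← hgdef] at hbij
    have hg0 : g ≠ 0 := by
      rw [hgdef]
      simp only [ne_eq, map_eq_zero]
      exact hγ
    have Hg : g * g⁻¹ = 1 := mul_inv_cancel₀ hg0
    have hgq : g ^ q = g := by
      have h := FiniteField.pow_card γ
      rw [hF] at h
      rw [hgdef, ← map_pow, h]
    have hgiq : (g⁻¹) ^ q = g⁻¹ := by rw [inv_pow, hgq]
    -- existence of X with nonzero quadratic-form value (needed when g⁻¹ + 1 = 0)
    have hPex : ∃ X : E, X * X ^ q + X ^ q * (X ^ q) ^ q + (X ^ q) ^ q * X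
        + X ^ 2 + (X ^ q) ^ 2 + ((X ^ q) ^ q) ^ 2 ≠ 0 := by
      by_contra hcon
      push_neg at hcon
      have hmul : ∀ X Y : E, X * Y + (X * Y) ^ q + ((X * Y) ^ q) ^ q
          = (X + X ^ q + (X ^ q) ^ q) * (Y + Y ^ q + (Y ^ q) ^ q) := by
        intro X Y
        have hA := hcon X
        have hB := hcon Y
        have hC := hcon (X + Y)
        rw [hfrob] at hC
        rw [hfrob] at hC
        simp only [mul_pow]
        linear_combination hA + hB - hC
          + (X * Y + X ^ q * Y ^ q + (X ^ q) ^ q * (Y ^ q) ^ q) * h2E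
      have hTrMfix : ∀ a : E, (a + a ^ q + (a ^ q) ^ q) ^ q = a + a ^ q + (a ^ q) ^ q := by
        intro a; rw [hfrob, hfrob, hq3]; ring
      have hpol0 : (Polynomial.X ^ q - Polynomial.X : Polynomial E) ≠ 0 := by
        intro h
        have h1 := congrArg (fun p => Polynomial.coeff p q) h
        simp only [Polynomial.coeff_sub, Polynomial.coeff_X_pow, if_pos rfl, Polynomial.coeff_X,
          if_neg (by omega : ¬(1 : ℕ) = q), Polynomial.coeff_zero, sub_zero] at h1
        exact one_ne_zero h1
      have hmem : ∀ z : E, z ^ q = z →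
          z ∈ (Polynomial.X ^ q - Polynomial.X : Polynomial E).roots.toFinset := by
        intro z hz
        rw [Multiset.mem_toFinset, Polynomial.mem_roots hpol0]
        simp [Polynomial.IsRoot, hz]
      have hdeg : (Polynomial.X ^ q - Polynomial.X : Polynomial E).natDegree ≤ q := by
        refine (Polynomial.natDegree_sub_le _ _).trans ?_
        rw [Polynomial.natDegree_X_pow, Polynomial.natDegree_X]
        exact max_le le_rfl (by omega)
      have hnotinj : ¬ Function.Injective (fun a : E => a + a ^ q + (a ^ q) ^ q) := by
        intro hinj
        have hle : Fintype.card E ≤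
            (Polynomial.X ^ q - Polynomial.X : Polynomial E).roots.toFinset.card := by
          have := Finset.card_le_card_of_injOn (s := (Finset.univ : Finset E))
            (t := (Polynomial.X ^ q - Polynomial.X : Polynomial E).roots.toFinset)
            (f := fun a : E => a + a ^ q + (a ^ q) ^ q)
            (fun a _ => hmem _ (hTrMfix a)) (hinj.injOn)
          simpa using this
        have hle2 : Fintype.card E ≤ q :=
          hle.trans ((Multiset.toFinset_card_le _).trans
            ((Polynomial.card_roots' _).trans hdeg))
        rw [hE] at hle2
        have hlt : q ^ 1 < q ^ 3 := Nat.pow_lt_pow_right (by omega) (by omega)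
        rw [pow_one] at hlt
        omega
      obtain ⟨a, b, hab, hne⟩ := Function.not_injective_iff.mp hnotinj
      have hab' : a + a ^ q + (a ^ q) ^ q = b + b ^ q + (b ^ q) ^ q := hab
      have hx0ne : a - b ≠ 0 := sub_ne_zero.mpr hne
      have hTr0 : (a - b) + (a - b) ^ q + ((a - b) ^ q) ^ q = 0 := by
        rw [hsub, hsub]; linear_combination hab'
      have hcontr := hmul (a - b) (a - b)⁻¹
      rw [mul_inv_cancel₀ hx0ne, hTr0, zero_mul] at hcontr
      simp only [one_pow] at hcontr
      have h10 : (1 : E) = 0 := by linear_combination hcontr - h2E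
      exact one_ne_zero h10
    -- choose X with r ≠ 0
    obtain ⟨X, hX⟩ : ∃ X : E, g⁻¹ + 1 + (X * X ^ q + X ^ q * (X ^ q) ^ q + (X ^ q) ^ q * X
        + X ^ 2 + (X ^ q) ^ 2 + ((X ^ q) ^ q) ^ 2) ≠ 0 := by
      by_cases h01 : g⁻¹ + 1 = 0
      · obtain ⟨X, hP⟩ := hPex
        exact ⟨X, by rw [h01, zero_add]; exact hP⟩
      · refine ⟨0, ?_⟩
        simpa [zero_pow (show q ≠ 0 by omega)] using h01
    obtain ⟨u, hu⟩ : ∃ u : E, u = X ^ q := ⟨_, rfl⟩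
    obtain ⟨v, hv⟩ : ∃ v : E, v = u ^ q := ⟨_, rfl⟩
    rw [← hu, ← hv] at hX
    have hvq : v ^ q = X := by rw [hv, hu]; exact hq3 X
    obtain ⟨c, hc2⟩ := hsqbij.surjective
      (g⁻¹ + 1 + (X * u + u * v + v * X + X ^ 2 + u ^ 2 + v ^ 2))
    simp only at hc2
    have hc0 : c ≠ 0 := by
      intro h0
      rw [h0] at hc2
      simp only [ne_eq] at hX
      apply hX
      rw [← hc2]
      ring
    have hrq : (g⁻¹ + 1 + (X * u + u * v + v * X + X ^ 2 + u ^ 2 + v ^ 2)) ^ q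
        = g⁻¹ + 1 + (X * u + u * v + v * X + X ^ 2 + u ^ 2 + v ^ 2) := by
      simp only [hfrob, mul_pow, one_pow]
      rw [hgiq, pow_right_comm X 2 q, pow_right_comm u 2 q, pow_right_comm v 2 q,
        ← hu, ← hv, hvq]
      ring
    have hcq : c ^ q = c := by
      have h := congrArg (fun x : E => x ^ q) hc2
      rw [hrq, pow_right_comm c 2 q] at h
      exact hsqinj (h.trans hc2.symm)
    have h1' : (X + c) ^ q = u + c := by rw [hfrob, hcq, ← hu]
    have h2' : (u + c) ^ q = v + c := by rw [hfrob, hcq, ← hv]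
    have h3' : (v + c) ^ q = X + c := by rw [hfrob, hcq, hvq]
    have hkey1 := key X u v hu.symm hv.symm hvq
    have hkey2 := key (X + c) (u + c) (v + c) h1' h2' h3'
    have FEQ : (X + c) ^ 2 + g * Tr ((X + c) ^ (q + 1) + (X + c) ^ (q ^ 2 + q + 2)
          + (X + c) ^ (q + 3) + (X + c) ^ (3 * q + 1))
        = X ^ 2 + g * Tr (X ^ (q + 1) + X ^ (q ^ 2 + q + 2) + X ^ (q + 3) + X ^ (3 * q + 1)) := by
      rw [hkey1, hkey2]
      linear_combination
        ((1:E) + (12)*g + (9)*g*g⁻¹ + (9)*c^2*g + (12)*v*c*g + (16)*v^2*g + (12)*u*c*g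
          + (20)*u*v*g + (16)*u^2*g + (12)*X*c*g + (20)*X*v*g + (20)*X*u*g + (16)*X^2*g) * hc2
        + ((1:E) + g⁻¹ + v^2 + u*v + u^2 + X*v + X*u + X^2) * Hg
        + ((1:E) + g⁻¹ + (6)*g + (10)*g*g⁻¹ + (4)*g*g⁻¹^2 + (7)*v*c*g + (6)*v*c*g*g⁻¹ + v^2
          + (14)*v^2*g + (12)*v^2*g*g⁻¹ + (7)*v^3*c*g + (8)*v^4*g + (7)*u*c*g + (6)*u*c*g*g⁻¹
          + u*v + (16)*u*v*g + (14)*u*v*g*g⁻¹ + (14)*u*v^2*c*g + (18)*u*v^3*g + u^2 + (14)*u^2*g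
          + (12)*u^2*g*g⁻¹ + (14)*u^2*v*c*g + (26)*u^2*v^2*g + (7)*u^3*c*g + (18)*u^3*v*g
          + (8)*u^4*g + X*c + (7)*X*c*g + (6)*X*c*g*g⁻¹ + X*v + (16)*X*v*g + (14)*X*v*g*g⁻¹
          + (14)*X*v^2*c*g + (18)*X*v^3*g + X*u + (16)*X*u*g + (14)*X*u*g*g⁻¹ + (21)*X*u*v*c*g
          + (38)*X*u*v^2*g + (14)*X*u^2*c*g + (38)*X*u^2*v*g + (18)*X*u^3*g + X^2 + (14)*X^2*g
          + (12)*X^2*g*g⁻¹ + (14)*X^2*v*c*g + (26)*X^2*v^2*g + (14)*X^2*u*c*g + (38)*X^2*u*v*g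
          + (26)*X^2*u^2*g + (7)*X^3*c*g + (18)*X^3*v*g + (18)*X^3*u*g + (8)*X^4*g) * h2E
    have hXX : X + c = X := hbij.injective FEQ
    have : c = 0 := by linear_combination hXX
    exact hc0 this
  · rintro rfl
    simp only [map_zero, zero_mul, add_zero]
    exact hsqbij
end
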